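/- arXiv:1906.10533 — 8 statements merged into one kernel-verified Lean document; each statement's English description precedes it below -/
import Mathlib

section
/- Let N ≥ 1 and n be natural numbers. The family (v_p), where p ranges over all partitions of Fin n having at most N blocks, is linearly independent in the complex vector space of functions (Fin n → Fin N) → ℂ. -/
attribute [local instance] Classical.propDecidable

/-- The vector `T_p(1)` in the standard tensor basis: `v_p (j) = 1` iff `j` is constant
on every block of `p`. -/
noncomputable def partVec (N n : ℕ) (p : Setoid (Fin n)) : (Fin n → Fin N) → ℂ :=
  fun j => if ∀ a b : Fin n, p.r a b → j a = j b then 1 else 0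

/-- The number of blocks of a partition `p` of `Fin n`, i.e. the number of its
equivalence classes. -/
noncomputable def numBlocks {n : ℕ} (p : Setoid (Fin n)) : ℕ :=
  Nat.card (Quotient p)

/-- If `p` has at most `N` blocks, there is a coloring `j : Fin n → Fin N` whose kernel
is exactly `p`. -/
lemma exists_ker_eq {N n : ℕ} (q : Setoid (Fin n)) (h : numBlocks q ≤ N) :
    ∃ j : Fin n → Fin N, Setoid.ker j = q := by
  haveI : Fintype (Quotient q) := Fintype.ofFinite _
  have hcard : Fintype.card (Quotient q) ≤ Fintype.card (Fin N) := by
    simpa [numBlocks, Nat.card_eq_fintype_card] using h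
  obtain ⟨f⟩ := Function.Embedding.nonempty_of_card_le hcard
  refine ⟨fun a => f (Quotient.mk q a), Setoid.ext fun a b => ?_⟩
  constructor
  · intro hab
    exact Quotient.eq''.mp (f.injective hab)
  · intro hab
    exact congrArg f (Quotient.sound hab)

/-- For `N ≥ 1`, the family of vectors `v_p`, indexed by the partitions `p` of `Fin n`
with at most `N` blocks, is linearly independent. -/
theorem linearIndependent_partVec_card_blocks_le (N n : ℕ) (hN : 1 ≤ N) :
    LinearIndependent ℂ
      (fun p : {p : Setoid (Fin n) // numBlocks p ≤ N} => partVec N n p.val) := by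
  haveI : Finite (Setoid (Fin n)) :=
    Finite.of_injective (fun s : Setoid (Fin n) => s.r)
      (fun a b h => Setoid.ext fun x y => iff_of_eq (congrFun (congrFun h x) y))
  haveI : Fintype {p : Setoid (Fin n) // numBlocks p ≤ N} := Fintype.ofFinite _
  rw [Fintype.linearIndependent_iff]
  intro g hg
  have key : ∀ r : {p : Setoid (Fin n) // numBlocks p ≤ N},
      ∑ p ∈ Finset.univ.filter (fun p : {p : Setoid (Fin n) // numBlocks p ≤ N} => p ≤ r),
        g p = 0 := by
    intro r
    obtain ⟨j, hj⟩ := exists_ker_eq r.1 r.2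
    have h0 := congrFun hg j
    simp only [Finset.sum_apply, Pi.smul_apply, Pi.zero_apply, partVec, smul_ite,
      smul_eq_mul, mul_one, mul_zero] at h0
    rw [Finset.sum_filter]
    have hsum : ∀ p : {p : Setoid (Fin n) // numBlocks p ≤ N},
        (if p ≤ r then g p else 0)
          = g p * (if ∀ a b : Fin n, p.1.r a b → j a = j b then 1 else 0) := by
      intro p
      have hiff : (p ≤ r) ↔ (∀ a b : Fin n, p.1.r a b → j a = j b) := by
        rw [Subtype.coe_le_coe.symm, ← hj]
        constructor
        · intro hle a b hab
          exact hle hab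
        · intro H x y hxy
          exact H x y hxy
      by_cases hc : p ≤ r
      · rw [if_pos hc, if_pos (hiff.mp hc), mul_one]
      · rw [if_neg hc, if_neg (fun H => hc (hiff.mpr H)), mul_zero]
    simp only [hsum]
    exact h0
  intro q
  induction q using WellFoundedLT.induction with
  | ind r ih =>
    have hk := key r
    rwa [Finset.sum_eq_single_of_mem r (by simp)
      (fun p hp hne => ih p (lt_of_le_of_ne (Finset.mem_filter.mp hp).2 hne))] at hk
end

section
/- Let N ≥ 1 and n be natural numbers. Then, inside the complex vector space of functions (Fin n → Fin N) → ℂ, the span of { v_p : p a partition of Fin n with at most N blocks } equals the span of { v_p : p any partition of Fin n }. In particular (by the linear independence of the first family) the vectors v_p with b(p) ≤ N form a basis of the span of all the v_p. -/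
attribute [local instance] Classical.propDecidable

/-- Auxiliary vector: `kerVec N n q (j) = 1` iff the kernel of `j` is exactly `q`. -/
noncomputable def kerVec (N n : ℕ) (q : Setoid (Fin n)) : (Fin n → Fin N) → ℂ :=
  fun j => if Setoid.ker j = q then 1 else 0

instance finSetoid (n : ℕ) : Finite (Setoid (Fin n)) :=
  Finite.of_injective (fun s : Setoid (Fin n) => s.r)
    (fun a b h => by cases a; cases b; congr)

noncomputable instance (n : ℕ) : Fintype (Setoid (Fin n)) := Fintype.ofFinite _

lemma numBlocks_ker_le (N n : ℕ) (j : Fin n → Fin N) :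
    numBlocks (Setoid.ker j) ≤ N := by
  have : numBlocks (Setoid.ker j) = Nat.card (Set.range j) :=
    Nat.card_congr (Setoid.quotientKerEquivRange j)
  rw [this]
  calc Nat.card (Set.range j) ≤ Nat.card (Fin N) :=
        Nat.card_le_card_of_injective _ Subtype.val_injective
    _ = N := Nat.card_eq_fintype_card.trans (Fintype.card_fin N)

lemma numBlocks_anti {n : ℕ} {q q' : Setoid (Fin n)} (h : q ≤ q') :
    numBlocks q' ≤ numBlocks q := by
  apply Nat.card_le_card_of_surjective (Quotient.map' id (fun a b hab => Setoid.le_def.mp h hab))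
  intro x
  induction x using Quotient.inductionOn' with
  | h a => exact ⟨Quotient.mk'' a, rfl⟩

lemma partVec_eq_sum (N n : ℕ) (p : Setoid (Fin n)) :
    partVec N n p = ∑ q ∈ Finset.univ.filter (p ≤ ·), kerVec N n q := by
  funext j
  simp only [Finset.sum_apply, kerVec, partVec]
  have : ∀ q : Setoid (Fin n), (if Setoid.ker j = q then (1:ℂ) else 0)
      = if q = Setoid.ker j then 1 else 0 := fun q => by simp [eq_comm]
  simp_rw [this]
  rw [Finset.sum_ite_eq']
  have hiff : (∀ a b : Fin n, p.r a b → j a = j b) ↔ p ≤ Setoid.ker j := by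
    constructor
    · intro h; rw [Setoid.le_def]; intro a b hab; exact h a b hab
    · intro h a b hab; exact Setoid.le_def.mp h hab
  simp [hiff, Finset.mem_filter]

lemma kerVec_eq_zero (N n : ℕ) (q : Setoid (Fin n)) (h : N < numBlocks q) :
    kerVec N n q = 0 := by
  funext j
  simp only [kerVec, Pi.zero_apply, ite_eq_right_iff]
  intro hq
  exact absurd (hq ▸ numBlocks_ker_le N n j) (not_le.mpr h)

/-- For `N ≥ 1`, the span of the vectors `v_p` over the partitions of `Fin n` with at
most `N` blocks equals the span of the vectors `v_p` over all partitions of `Fin n`. -/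
theorem span_partVec_card_blocks_le_eq_span (N n : ℕ) (hN : 1 ≤ N) :
    Submodule.span ℂ ((fun p : Setoid (Fin n) => partVec N n p) '' {p | numBlocks p ≤ N})
      = Submodule.span ℂ (Set.range fun p : Setoid (Fin n) => partVec N n p) := by
  set S := (fun p : Setoid (Fin n) => partVec N n p) '' {p | numBlocks p ≤ N} with hS
  have claimA : ∀ q : Setoid (Fin n), numBlocks q ≤ N → kerVec N n q ∈ Submodule.span ℂ S := by
    intro q
    induction q using WellFoundedGT.induction with
    | _ q IH =>
      intro hq
      have hsplit : Finset.univ.filter (q ≤ ·) = insert q (Finset.univ.filter (q < ·)) := by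
        ext x
        simp only [Finset.mem_filter, Finset.mem_univ, true_and, Finset.mem_insert]
        constructor
        · intro h
          rcases eq_or_lt_of_le h with h' | h'
          · exact Or.inl h'.symm
          · exact Or.inr ⟨h'.le, h'.not_ge⟩
        · rintro (rfl | ⟨h1, h2⟩)
          · exact le_rfl
          · exact h1
      have hker : kerVec N n q
          = partVec N n q - ∑ q' ∈ Finset.univ.filter (q < ·), kerVec N n q' := by
        rw [partVec_eq_sum, hsplit, Finset.sum_insert (by simp)]
        ring
      rw [hker]
      apply Submodule.sub_mem
      · exact Submodule.subset_span ⟨q, hq, rfl⟩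
      · apply Submodule.sum_mem
        intro q' hq'
        simp only [Finset.mem_filter] at hq'
        exact IH q' hq'.2 (le_trans (numBlocks_anti hq'.2.le) hq)
  have claimB : ∀ p : Setoid (Fin n), partVec N n p ∈ Submodule.span ℂ S := by
    intro p
    rw [partVec_eq_sum]
    apply Submodule.sum_mem
    intro q _
    by_cases h : numBlocks q ≤ N
    · exact claimA q h
    · rw [kerVec_eq_zero N n q (not_le.mp h)]
      exact Submodule.zero_mem _
  apply le_antisymm
  · exact Submodule.span_mono (Set.image_subset_range _ _)
  · rw [Submodule.span_le]
    rintro _ ⟨p, rfl⟩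
    exact claimB p
end

section
/- Let N ≥ 1 and n be natural numbers and let p, q be partitions of Fin n. Then Σ_{j : Fin n → Fin N} v_p(j)·v_q(j) = N^{b(p ⊔ q)}, where p ⊔ q denotes the join of p and q in the lattice of equivalence relations on Fin n (the smallest equivalence relation containing both p and q) and b(p ⊔ q) is its number of equivalence classes. (This is the entry formula ⟨T_p(1), T_q(1)⟩ = N^{rl(q*,p)} for the Gram matrix, since for partitions without upper points rl(q*,p) equals the number of blocks of the join.) -/
attribute [local instance] Classical.propDecidable

lemma respects_iff_le {n N : ℕ} (p : Setoid (Fin n)) (j : Fin n → Fin N) :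
    (∀ a b : Fin n, p.r a b → j a = j b) ↔ p ≤ Setoid.ker j := by
  constructor
  · intro h a b hab; exact h a b hab
  · intro h a b hab; exact h hab

noncomputable def respectEquiv {n N : ℕ} (r : Setoid (Fin n)) :
    {j : Fin n → Fin N // r ≤ Setoid.ker j} ≃ (Quotient r → Fin N) where
  toFun j := Quotient.lift j.1 (fun a b hab => j.2 hab)
  invFun g := ⟨fun a => g (Quotient.mk r a), fun {a b} hab => by
    show g (Quotient.mk r a) = g (Quotient.mk r b)
    exact congrArg g (Quotient.sound hab)⟩
  left_inv j := by ext a; rfl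
  right_inv g := by funext x; induction x using Quotient.inductionOn; rfl

/-- Gram entry formula: `⟨v_p, v_q⟩ = N ^ b(p ⊔ q)`, where `p ⊔ q` is the join of the
two partitions in the lattice of equivalence relations on `Fin n`. -/
theorem sum_partVec_mul_partVec (N n : ℕ) (hN : 1 ≤ N) (p q : Setoid (Fin n)) :
    ∑ j : Fin n → Fin N, partVec N n p j * partVec N n q j
      = (N : ℂ) ^ numBlocks (p ⊔ q) := by
  classical
  have key : ∀ j : Fin n → Fin N,
      partVec N n p j * partVec N n q j
        = if p ⊔ q ≤ Setoid.ker j then (1 : ℂ) else 0 := by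
    intro j
    have h : (p ⊔ q ≤ Setoid.ker j) ↔
        (∀ a b : Fin n, p.r a b → j a = j b) ∧ (∀ a b : Fin n, q.r a b → j a = j b) := by
      rw [sup_le_iff, respects_iff_le p j, respects_iff_le q j]
    unfold partVec
    by_cases h1 : ∀ a b : Fin n, p.r a b → j a = j b <;>
      by_cases h2 : ∀ a b : Fin n, q.r a b → j a = j b
    · rw [if_pos h1, if_pos h2, if_pos (h.mpr ⟨h1, h2⟩), mul_one]
    · rw [if_neg h2, mul_zero, if_neg (fun hc => h2 (h.mp hc).2)]
    · rw [if_neg h1, zero_mul, if_neg (fun hc => h1 (h.mp hc).1)]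
    · rw [if_neg h1, zero_mul, if_neg (fun hc => h1 (h.mp hc).1)]
  rw [Finset.sum_congr rfl (fun j _ => key j), Finset.sum_boole]
  have hcard : (Finset.univ.filter fun j : Fin n → Fin N => p ⊔ q ≤ Setoid.ker j).card
      = Fintype.card {j : Fin n → Fin N // p ⊔ q ≤ Setoid.ker j} := by
    rw [Fintype.card_subtype]
  rw [hcard, Fintype.card_congr (respectEquiv (p ⊔ q)), Fintype.card_fun,
    Fintype.card_fin]
  have : numBlocks (p ⊔ q) = Fintype.card (Quotient (p ⊔ q)) := by
    simp [numBlocks, Nat.card_eq_fintype_card]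
  rw [this]
  push_cast
  ring
end

section
/- Let N ≥ 1 and k, l, m be natural numbers, let p be a partition on k upper and l lower points and q a partition on l upper and m lower points. Then for every i : Fin k → Fin N and every j : Fin m → Fin N one has Σ_{h : Fin l → Fin N} δ_p(i,h)·δ_q(h,j) = N^{rl(q,p)} · δ_{q∘p}(i,j). Equivalently, on the level of the associated linear maps, T_q ∘ T_p = N^{rl(q,p)} · T_{q∘p}. -/
attribute [local instance] Classical.propDecidable

/-- `δ_p(i,h)` for a partition `p` on `k` upper and `l` lower points: it is `1` if the
labelling given by `i` on the upper points and `h` on the lower points is constant on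
every block of `p`, and `0` otherwise. -/
noncomputable def deltaVal (N k l : ℕ) (p : Setoid (Fin k ⊕ Fin l))
    (i : Fin k → Fin N) (h : Fin l → Fin N) : ℂ :=
  if ∀ a b : Fin k ⊕ Fin l, p.r a b → Sum.elim i h a = Sum.elim i h b then 1 else 0

/-- The smallest equivalence relation `S(q,p)` on `Fin k ⊕ Fin l ⊕ Fin m` containing the
image of `p` on the first two summands and the image of `q` on the last two summands. -/
def Scomp {k l m : ℕ} (q : Setoid (Fin l ⊕ Fin m)) (p : Setoid (Fin k ⊕ Fin l)) :
    Setoid (Fin k ⊕ (Fin l ⊕ Fin m)) :=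
  sInf {s | (∀ a b : Fin k ⊕ Fin l, p.r a b →
              s.r (Sum.map id Sum.inl a) (Sum.map id Sum.inl b)) ∧
            (∀ a b : Fin l ⊕ Fin m, q.r a b → s.r (Sum.inr a) (Sum.inr b))}

/-- The composition `q ∘ p` of partitions: the restriction of `S(q,p)` to the outer two
summands `Fin k ⊕ Fin m`. -/
def compPart {k l m : ℕ} (q : Setoid (Fin l ⊕ Fin m)) (p : Setoid (Fin k ⊕ Fin l)) :
    Setoid (Fin k ⊕ Fin m) :=
  Setoid.comap (Sum.map id Sum.inr) (Scomp q p)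

/-- `rl(q,p)`: the number of equivalence classes of `S(q,p)` entirely contained in the
middle summand `Fin l` (the "remaining loops"). -/
noncomputable def rlComp {k l m : ℕ} (q : Setoid (Fin l ⊕ Fin m))
    (p : Setoid (Fin k ⊕ Fin l)) : ℕ :=
  Nat.card {c : Quotient (Scomp q p) //
    ∀ x : Fin k ⊕ (Fin l ⊕ Fin m), Quotient.mk (Scomp q p) x = c →
      ∃ b : Fin l, x = Sum.inr (Sum.inl b)}

/-- `T_q ∘ T_p = N^{rl(q,p)} · T_{q∘p}` on the level of matrix entries:
`Σ_h δ_p(i,h)·δ_q(h,j) = N^{rl(q,p)} · δ_{q∘p}(i,j)`. -/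
theorem sum_delta_mul_delta (N k l m : ℕ) (hN : 1 ≤ N)
    (p : Setoid (Fin k ⊕ Fin l)) (q : Setoid (Fin l ⊕ Fin m))
    (i : Fin k → Fin N) (j : Fin m → Fin N) :
    ∑ h : Fin l → Fin N, deltaVal N k l p i h * deltaVal N l m q h j
      = (N : ℂ) ^ rlComp q p * deltaVal N k m (compPart q p) i j := by
  classical
  set s := Scomp q p with hsdef
  -- notation
  set Fh : (Fin l → Fin N) → (Fin k ⊕ (Fin l ⊕ Fin m)) → Fin N :=
    fun h => Sum.elim i (Sum.elim h j) with hFh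
  have hFp : ∀ h a, Fh h (Sum.map id Sum.inl a) = Sum.elim i h a := by
    intro h a; cases a <;> rfl
  have hFq : ∀ h a, Fh h (Sum.inr a) = Sum.elim h j a := by
    intro h a; cases a <;> rfl
  have hFe : ∀ h a, Fh h (Sum.map id Sum.inr a) = Sum.elim i j a := by
    intro h a; cases a <;> rfl
  -- generators are in s
  have hembP : ∀ a b, p.r a b → s.r (Sum.map id Sum.inl a) (Sum.map id Sum.inl b) := by
    intro a b hab t ht; exact ht.1 a b hab
  have hembQ : ∀ a b, q.r a b → s.r (Sum.inr a) (Sum.inr b) := by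
    intro a b hab t ht; exact ht.2 a b hab
  -- the condition
  have hcond : ∀ h : Fin l → Fin N,
      ((∀ a b, p.r a b → Sum.elim i h a = Sum.elim i h b) ∧
       (∀ a b, q.r a b → Sum.elim h j a = Sum.elim h j b)) ↔
      (∀ x y, s.r x y → Fh h x = Fh h y) := by
    intro h
    constructor
    · rintro ⟨h1, h2⟩ x y hxy
      have hker : Setoid.ker (Fh h) ∈
          {t : Setoid (Fin k ⊕ (Fin l ⊕ Fin m)) |
            (∀ a b : Fin k ⊕ Fin l, p.r a b →
              t.r (Sum.map id Sum.inl a) (Sum.map id Sum.inl b)) ∧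
            (∀ a b : Fin l ⊕ Fin m, q.r a b → t.r (Sum.inr a) (Sum.inr b))} := by
        constructor
        · intro a b hab
          show Fh h _ = Fh h _
          rw [hFp, hFp]; exact h1 a b hab
        · intro a b hab
          show Fh h _ = Fh h _
          rw [hFq, hFq]; exact h2 a b hab
      exact hxy _ hker
    · intro hc
      constructor
      · intro a b hab
        have := hc _ _ (hembP a b hab)
        rwa [hFp, hFp] at this
      · intro a b hab
        have := hc _ _ (hembQ a b hab)
        rwa [hFq, hFq] at this
  have hterm : ∀ h : Fin l → Fin N,
      deltaVal N k l p i h * deltaVal N l m q h j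
        = if (∀ x y, s.r x y → Fh h x = Fh h y) then (1 : ℂ) else 0 := by
    intro h
    unfold deltaVal
    by_cases hc : ∀ x y, s.r x y → Fh h x = Fh h y
    · obtain ⟨h1, h2⟩ := (hcond h).mpr hc
      rw [if_pos h1, if_pos h2, if_pos hc, one_mul]
    · rw [if_neg hc]
      by_cases h1 : ∀ a b, p.r a b → Sum.elim i h a = Sum.elim i h b
      · by_cases h2 : ∀ a b, q.r a b → Sum.elim h j a = Sum.elim h j b
        · exact absurd ((hcond h).mp ⟨h1, h2⟩) hc
        · rw [if_neg h2, mul_zero]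
      · rw [if_neg h1, zero_mul]
  rw [Finset.sum_congr rfl fun h _ => hterm h]
  -- main case split
  by_cases hA : ∀ a b : Fin k ⊕ Fin m,
      (compPart q p).r a b → Sum.elim i j a = Sum.elim i j b
  · -- compatible case
    rw [deltaVal, if_pos hA, mul_one]
    rw [Finset.sum_boole]
    -- now count
    set Mid : Quotient s → Prop := fun c =>
      ∀ x : Fin k ⊕ (Fin l ⊕ Fin m), Quotient.mk s x = c →
        ∃ b : Fin l, x = Sum.inr (Sum.inl b) with hMid
    have hnm : ∀ c : Quotient s, ¬ Mid c →
        ∃ a : Fin k ⊕ Fin m, Quotient.mk s (Sum.map id Sum.inr a) = c := by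
      intro c hc
      have hc2 : ∃ x : Fin k ⊕ (Fin l ⊕ Fin m), Quotient.mk s x = c ∧
          ∀ b : Fin l, x ≠ Sum.inr (Sum.inl b) := by
        by_contra hcon
        push_neg at hcon
        exact hc fun x hx => hcon x hx
      obtain ⟨x, hx, hx2⟩ := hc2
      cases x with
      | inl a => exact ⟨Sum.inl a, hx⟩
      | inr y =>
        cases y with
        | inl b => exact absurd rfl (hx2 b)
        | inr a => exact ⟨Sum.inr a, hx⟩
    have hembnm : ∀ a : Fin k ⊕ Fin m, ¬ Mid (Quotient.mk s (Sum.map id Sum.inr a)) := by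
      intro a hm
      obtain ⟨b, hb⟩ := hm _ rfl
      cases a <;> simp [Sum.map] at hb
    -- value function
    set val : ({c : Quotient s // Mid c} → Fin N) → Quotient s → Fin N :=
      fun g c => if hm : Mid c then g ⟨c, hm⟩
        else Sum.elim i j (Classical.choose (hnm c hm)) with hval
    have hvalemb : ∀ g (a : Fin k ⊕ Fin m),
        val g (Quotient.mk s (Sum.map id Sum.inr a)) = Sum.elim i j a := by
      intro g a
      rw [hval]
      simp only
      rw [dif_neg (hembnm a)]
      have hspec := Classical.choose_spec (hnm _ (hembnm a))
      have hrel : s.r (Sum.map id Sum.inr (Classical.choose (hnm _ (hembnm a))))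
          (Sum.map id Sum.inr a) := Quotient.exact hspec
      exact hA _ _ hrel
    set bw : ({c : Quotient s // Mid c} → Fin N) → (Fin l → Fin N) :=
      fun g b => val g (Quotient.mk s (Sum.inr (Sum.inl b))) with hbw
    have hbwval : ∀ g x, Fh (bw g) x = val g (Quotient.mk s x) := by
      intro g x
      cases x with
      | inl a =>
        have := hvalemb g (Sum.inl a)
        exact this.symm
      | inr y =>
        cases y with
        | inl b => rfl
        | inr a =>
          have := hvalemb g (Sum.inr a)
          exact this.symm
    have hbwcond : ∀ g, ∀ x y, s.r x y → Fh (bw g) x = Fh (bw g) y := by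
      intro g x y hxy
      rw [hbwval, hbwval, Quotient.sound hxy]
    -- the equivalence
    have hcard : Fintype.card {h : Fin l → Fin N // ∀ x y, s.r x y → Fh h x = Fh h y}
        = Fintype.card ({c : Quotient s // Mid c} → Fin N) := by
      apply Fintype.card_congr
      refine ⟨fun h c => Quotient.lift (Fh h.1) (fun x y hxy => h.2 x y hxy) c.1,
        fun g => ⟨bw g, hbwcond g⟩, ?_, ?_⟩
      · rintro ⟨h, hh⟩
        apply Subtype.ext
        funext b
        show bw (fun c => Quotient.lift (Fh h) (fun x y hxy => hh x y hxy) c.1) b = h b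
        rw [hbw]
        simp only
        rw [hval]
        simp only
        by_cases hm : Mid (Quotient.mk s (Sum.inr (Sum.inl b)))
        · rw [dif_pos hm]
          rfl
        · rw [dif_neg hm]
          have hspec := Classical.choose_spec (hnm _ hm)
          have := hh _ _ (Quotient.exact hspec)
          rw [hFe] at this
          exact this
      · intro g
        funext c
        obtain ⟨c, hm⟩ := c
        induction c using Quotient.ind with
        | _ x =>
          show Quotient.lift (Fh (bw g)) _ (Quotient.mk s x) = _
          rw [Quotient.lift_mk]
          rw [hbwval]
          rw [hval]
          simp only
          rw [dif_pos hm]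
    rw [Fintype.card_fun] at hcard
    have hrl : rlComp q p = Fintype.card {c : Quotient s // Mid c} := by
      rw [rlComp, Nat.card_eq_fintype_card]
    have hfilter : (Finset.univ.filter
        (fun h : Fin l → Fin N => ∀ x y, s.r x y → Fh h x = Fh h y)).card
        = Fintype.card {h : Fin l → Fin N // ∀ x y, s.r x y → Fh h x = Fh h y} := by
      rw [Fintype.card_subtype]
    rw [hfilter, hcard, hrl]
    simp
  · -- incompatible case
    rw [deltaVal, if_neg hA, mul_zero]
    apply Finset.sum_eq_zero
    intro h _
    rw [if_neg]
    intro hc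
    apply hA
    intro a b hab
    have := hc _ _ hab
    rwa [hFe, hFe] at this
end

section
/- For all natural numbers N ≥ 4 and n ≥ 1, the value β_n(1/N) of the n-th reversed Beraha polynomial at 1/N is nonzero. -/
/-- The reversed Beraha polynomials: `β 0 = 0`, `β 1 = 1`,
`β (n+2) x = β (n+1) x - x * β n x`. -/
def beraha : ℕ → ℝ → ℝ
  | 0, _ => 0
  | 1, _ => 1
  | n + 2, x => beraha (n + 1) x - x * beraha n x

lemma beraha_aux (x : ℝ) (hx0 : 0 ≤ x) (hx : x ≤ 1/4) :
    ∀ n, 0 < beraha (n+1) x ∧ beraha (n+1) x ≤ 2 * beraha (n+2) x := by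
  intro n
  induction n with
  | zero =>
    constructor
    · show (0:ℝ) < 1; norm_num
    · show (1:ℝ) ≤ 2 * (1 - x * 0); linarith
  | succ k ih =>
    obtain ⟨h1, h2⟩ := ih
    have hpos : 0 < beraha (k+2) x := by linarith
    refine ⟨hpos, ?_⟩
    have h3 : beraha (k+3) x = beraha (k+2) x - x * beraha (k+1) x := rfl
    have h4 : x * beraha (k+1) x ≤ (1/4) * beraha (k+1) x :=
      mul_le_mul_of_nonneg_right hx h1.le
    linarith

/-- For all natural numbers `N ≥ 4` and `n ≥ 1`, the value of the `n`-th reversed Beraha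
polynomial at `1/N` is nonzero. -/
theorem beraha_ne_zero (N n : ℕ) (hN : 4 ≤ N) (hn : 1 ≤ n) :
    beraha n (1 / (N : ℝ)) ≠ 0 := by
  obtain ⟨m, rfl⟩ := Nat.exists_eq_add_of_le hn
  have hN' : (4:ℝ) ≤ N := by exact_mod_cast hN
  have hx0 : (0:ℝ) ≤ 1 / N := by positivity
  have hx : (1:ℝ) / N ≤ 1/4 := by
    apply div_le_div_of_nonneg_left <;> linarith
  have := (beraha_aux _ hx0 hx m).1
  rw [add_comm]
  exact this.ne'
end

section
/- For every natural number n ≥ 1, the set W(n, n−1) contains exactly one partition, namely the fully nested partition of Fin n whose blocks are the pairs {i, n+1−i} for 1 ≤ i ≤ ⌊n/2⌋, together with the singleton {(n+1)/2} when n is odd. -/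
attribute [local instance] Classical.propDecidable

/-- A partition of `Fin n` is *crossing* if there are points `a < b < c < d` with
`a ∼ c`, `b ∼ d` and `¬ a ∼ b`. -/
def IsCrossing {n : ℕ} (p : Setoid (Fin n)) : Prop :=
  ∃ a b c d : Fin n, a < b ∧ b < c ∧ c < d ∧ p.r a c ∧ p.r b d ∧ ¬ p.r a b

/-- The point `i` is a singleton of the partition `p`. -/
def IsSingletonPt {n : ℕ} (p : Setoid (Fin n)) (i : Fin n) : Prop :=
  ∀ j : Fin n, p.r i j → j = i

/-- `W(n,r)` (points of `Fin n` are numbered `1,…,n`, so the 1-indexed point `j` is the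
index `j-1`): the set of noncrossing partitions `p` of `Fin n` such that, with
`s = ⌊r/2⌋`, none of the points `1,…,s` (for even `r`) resp. `1,…,s+1` (for odd `r`) is a
singleton of `p`, and the points `1,…,s+1` lie in pairwise different blocks of `p`. -/
def Wset (n r : ℕ) : Set (Setoid (Fin n)) :=
  {p | ¬ IsCrossing p ∧
    (∀ i : Fin n, (i : ℕ) < (if r % 2 = 0 then r / 2 else r / 2 + 1) → ¬ IsSingletonPt p i) ∧
    (∀ i j : Fin n, (i : ℕ) ≤ r / 2 → (j : ℕ) ≤ r / 2 → p.r i j → i = j)}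

/-- The fully nested partition of `Fin n`: blocks are the pairs `{i, n+1-i}`
(1-indexed), together with the middle singleton when `n` is odd. -/
def nestedSetoid (n : ℕ) : Setoid (Fin n) where
  r a b := a = b ∨ (a : ℕ) + (b : ℕ) = n - 1
  iseqv := by
    refine ⟨fun a => Or.inl rfl, ?_, ?_⟩
    · rintro a b (h | h)
      · exact Or.inl h.symm
      · exact Or.inr (by omega)
    · rintro a b c (h | h) (h' | h')
      · exact Or.inl (h.trans h')
      · exact h ▸ Or.inr h'
      · exact Or.inr (h' ▸ h)
      · exact Or.inl (Fin.ext (by omega))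

/-- For `n ≥ 1`, the set `W(n, n-1)` contains exactly one partition, namely the fully
nested partition of `Fin n`. -/
theorem Wset_pred_eq_singleton_nested (n : ℕ) (hn : 1 ≤ n) :
    Wset n (n - 1) = {nestedSetoid n} := by
  ext p
  simp only [Set.mem_singleton_iff]
  constructor
  · rintro ⟨hnc, hns, hblk⟩
    -- points with index ≤ (n-1)/2 are mutually unrelated
    have hsm : ∀ a b : Fin n, 2*(a:ℕ) ≤ n-1 → 2*(b:ℕ) ≤ n-1 → p.r a b → a = b := by
      intro a b ha hb h
      exact hblk a b (by omega) (by omega) h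
    have hnsing : ∀ x : Fin n, 2*(x:ℕ) < n-1 → ∃ z : Fin n, p.r x z ∧ z ≠ x := by
      intro x hx
      have h := hns x (by split_ifs with h <;> omega)
      unfold IsSingletonPt at h
      push_neg at h
      obtain ⟨j, hj1, hj2⟩ := h
      exact ⟨j, hj1, hj2⟩
    have hbig : ∀ x z : Fin n, 2*(x:ℕ) < n-1 → p.r x z → z ≠ x → n-1 < 2*(z:ℕ) := by
      intro x z hx h hne
      by_contra hle
      push_neg at hle
      exact hne (hsm z x (by omega) (by omega) (p.symm' h))
    -- Claim A : partners of small points are at most the mirror point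
    have claimA : ∀ k, ∀ x z : Fin n, n-1-(z:ℕ) = k → 2*(x:ℕ) < n-1 → p.r x z →
        (z:ℕ) ≤ n-1-(x:ℕ) := by
      intro k
      induction k using Nat.strong_induction_on with
      | _ k ih =>
        intro x z hk hx hxz
        by_contra hgt
        push_neg at hgt
        have hzn : (z:ℕ) < n := z.isLt
        have hxn : (x:ℕ) < n := x.isLt
        have hzbig : n-1 < 2*(z:ℕ) := by omega
        set w : Fin n := ⟨n-1-(z:ℕ), by omega⟩ with hw
        have hwval : (w:ℕ) = n-1-(z:ℕ) := rfl
        have hwsmall : 2*(w:ℕ) < n-1 := by omega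
        have hwx : (w:ℕ) < (x:ℕ) := by omega
        obtain ⟨u, hu, hune⟩ := hnsing w hwsmall
        have hubig : n-1 < 2*(u:ℕ) := hbig w u hwsmall hu hune
        have hun : (u:ℕ) < n := u.isLt
        have hwnx : ¬ p.r w x := by
          intro h
          have := hsm w x (by omega) (by omega) h
          have : (w:ℕ) = (x:ℕ) := by rw [this]
          omega
        rcases lt_trichotomy (u:ℕ) (z:ℕ) with hlt | heq | hgt2
        · exact hnc ⟨w, x, u, z, Fin.lt_def.mpr hwx, Fin.lt_def.mpr (by omega),
            Fin.lt_def.mpr hlt, hu, hxz, hwnx⟩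
        · have huz : u = z := Fin.ext heq
          exact hwnx (p.trans' (huz ▸ hu) (p.symm' hxz))
        · have := ih (n-1-(u:ℕ)) (by omega) w u rfl hwsmall hu
          omega
    -- Claim B : each small point is related to its mirror
    have claimB : ∀ k, ∀ x : Fin n, n-1-(x:ℕ) = k → 2*(x:ℕ) < n-1 →
        p.r x ⟨n-1-(x:ℕ), by omega⟩ := by
      intro k
      induction k using Nat.strong_induction_on with
      | _ k ih =>
        intro x hk hx
        obtain ⟨z, hz, hzne⟩ := hnsing x hx
        have hzbig : n-1 < 2*(z:ℕ) := hbig x z hx hz hzne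
        have hzle : (z:ℕ) ≤ n-1-(x:ℕ) := claimA _ x z rfl hx hz
        have hzn : (z:ℕ) < n := z.isLt
        have hxn : (x:ℕ) < n := x.isLt
        rcases eq_or_lt_of_le hzle with heq | hlt
        · have : z = (⟨n-1-(x:ℕ), by omega⟩ : Fin n) := Fin.ext (by simpa using heq)
          exact this ▸ hz
        · set y : Fin n := ⟨n-1-(z:ℕ), by omega⟩ with hy
          have hyval : (y:ℕ) = n-1-(z:ℕ) := rfl
          have hysmall : 2*(y:ℕ) < n-1 := by omega
          have hxy : (x:ℕ) < (y:ℕ) := by omega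
          have h1 := ih (n-1-(y:ℕ)) (by omega) y rfl hysmall
          have h2 : (⟨n-1-(y:ℕ), by omega⟩ : Fin n) = z := Fin.ext (by simp [hyval]; omega)
          have h3 : p.r y z := h2 ▸ h1
          have := hsm x y (by omega) (by omega) (p.trans' hz (p.symm' h3))
          have : (x:ℕ) = (y:ℕ) := by rw [this]
          omega
    have fwd : ∀ a b : Fin n, (a:ℕ) < (b:ℕ) → p.r a b → (a:ℕ)+(b:ℕ) = n-1 := by
      intro a b hab h
      have han : (a:ℕ) < n := a.isLt
      have hbn : (b:ℕ) < n := b.isLt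
      rcases le_or_gt (2*(b:ℕ)) (n-1) with hb | hb
      · have := hsm a b (by omega) (by omega) h
        have : (a:ℕ) = (b:ℕ) := by rw [this]
        omega
      rcases le_or_gt (2*(a:ℕ)) (n-1) with ha | ha
      · have hb' : 2*(n-1-(b:ℕ)) < n-1 := by omega
        have h1 := claimB (n-1-(n-1-(b:ℕ))) ⟨n-1-(b:ℕ), by omega⟩ rfl (by simpa using hb')
        have h2 : (⟨n-1-(n-1-(b:ℕ)), by omega⟩ : Fin n) = b := Fin.ext (by simp; omega)
        have h3 : p.r (⟨n-1-(b:ℕ), by omega⟩ : Fin n) b := by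
          simpa [h2] using h1
        have := hsm a ⟨n-1-(b:ℕ), by omega⟩ (by omega) (by simpa using (by omega : 2*(n-1-(b:ℕ)) ≤ n-1)) (p.trans' h (p.symm' h3))
        have : (a:ℕ) = n-1-(b:ℕ) := by rw [this]
        omega
      · have ha' : 2*(n-1-(a:ℕ)) < n-1 := by omega
        have hb' : 2*(n-1-(b:ℕ)) < n-1 := by omega
        have h1 := claimB (n-1-(n-1-(a:ℕ))) ⟨n-1-(a:ℕ), by omega⟩ rfl (by simpa using ha')
        have h2 : (⟨n-1-(n-1-(a:ℕ)), by omega⟩ : Fin n) = a := Fin.ext (by simp; omega)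
        have h3 : p.r (⟨n-1-(a:ℕ), by omega⟩ : Fin n) a := by simpa [h2] using h1
        have h4 := claimB (n-1-(n-1-(b:ℕ))) ⟨n-1-(b:ℕ), by omega⟩ rfl (by simpa using hb')
        have h5 : (⟨n-1-(n-1-(b:ℕ)), by omega⟩ : Fin n) = b := Fin.ext (by simp; omega)
        have h6 : p.r (⟨n-1-(b:ℕ), by omega⟩ : Fin n) b := by simpa [h5] using h4
        have h7 := hsm ⟨n-1-(a:ℕ), by omega⟩ ⟨n-1-(b:ℕ), by omega⟩
          (by simp only [Fin.val_mk]; omega) (by simp only [Fin.val_mk]; omega)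
          (p.trans' h3 (p.trans' h (p.symm' h6)))
        have : n-1-(a:ℕ) = n-1-(b:ℕ) := by
          simpa using congrArg Fin.val h7
        omega
    apply Setoid.ext
    intro a b
    show p.r a b ↔ (nestedSetoid n).r a b
    show p.r a b ↔ (a = b ∨ (a:ℕ) + (b:ℕ) = n - 1)
    constructor
    · intro h
      rcases lt_trichotomy (a:ℕ) (b:ℕ) with hlt | heq | hgt
      · exact Or.inr (fwd a b hlt h)
      · exact Or.inl (Fin.ext heq)
      · have := fwd b a hgt (p.symm' h)
        exact Or.inr (by omega)
    · rintro (rfl | hsum)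
      · exact p.refl' a
      · have han : (a:ℕ) < n := a.isLt
        have hbn : (b:ℕ) < n := b.isLt
        rcases lt_trichotomy (a:ℕ) (b:ℕ) with hlt | heq | hgt
        · have ha : 2*(a:ℕ) < n-1 := by omega
          have h1 := claimB (n-1-(a:ℕ)) a rfl ha
          have h2 : (⟨n-1-(a:ℕ), by omega⟩ : Fin n) = b := Fin.ext (by simp; omega)
          exact h2 ▸ h1
        · exact (Fin.ext heq : a = b) ▸ p.refl' a
        · have hbs : 2*(b:ℕ) < n-1 := by omega
          have h1 := claimB (n-1-(b:ℕ)) b rfl hbs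
          have h2 : (⟨n-1-(b:ℕ), by omega⟩ : Fin n) = a := Fin.ext (by simp; omega)
          exact p.symm' (h2 ▸ h1)
  · rintro rfl
    refine ⟨?_, ?_, ?_⟩
    · rintro ⟨a, b, c, d, h1, h2, h3, hac, hbd, hnab⟩
      have h1' := Fin.lt_def.mp h1
      have h2' := Fin.lt_def.mp h2
      have h3' := Fin.lt_def.mp h3
      rcases hac with h | h
      · exact absurd (congrArg Fin.val h) (by omega)
      rcases hbd with h' | h'
      · exact absurd (congrArg Fin.val h') (by omega)
      omega
    · intro i hi hsing
      have hin : (i:ℕ) < n := i.isLt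
      have hi' : 2*(i:ℕ) < n-1 := by
        split_ifs at hi with h <;> omega
      have := hsing ⟨n-1-(i:ℕ), by omega⟩ (Or.inr (by simp; omega))
      have := congrArg Fin.val this
      simp at this
      omega
    · intro i j hi hj hij
      rcases hij with h | h
      · exact h
      · exact Fin.ext (by omega)
end

section
/- Let N ≥ 1 and let 0 < r = 2s+1 < n−1 with r odd. Then: (a) for every p ∈ Y(n,r) the points s+1 and s+2 lie in the same block of p; (b) the map α sending p ∈ Y(n,r) to the partition of Fin(n−1) obtained by deleting the point s+2 from p (and relabelling the points s+3,…,n as s+2,…,n−1 via the order-preserving bijection) is a bijection from Y(n,r) onto W(n−1, r−1); and (c) for all p, q ∈ Y(n,r) one has e_r(p,q) = e_{r−1}(α(p), α(q)). Consequently B(n,r) equals A(n−1, r−1) up to a simultaneous permutation of rows and columns. -/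
attribute [local instance] Classical.propDecidable

noncomputable instance setoidFintype {α : Type*} [Fintype α] : Fintype (Setoid α) :=
  Fintype.ofInjective (fun p : Setoid α => p.r) fun p q h => by
    cases p; cases q; cases h; rfl

/-- `Y(n,r) = W(n,r) \ W(n,r+1)`. -/
def Yset (n r : ℕ) : Set (Setoid (Fin n)) := Wset n r \ Wset n (r + 1)

/-- The graph `G(p,q)`: the smallest equivalence relation on `Fin n ⊕ Fin n` containing
`p` on the left, `q` on the right, and identifying `inl i` with `inr i` for every `i`. -/
def Gjoin {n : ℕ} (p q : Setoid (Fin n)) : Setoid (Fin n ⊕ Fin n) :=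
  sInf {s | (∀ a b : Fin n, p.r a b → s.r (Sum.inl a) (Sum.inl b)) ∧
            (∀ a b : Fin n, q.r a b → s.r (Sum.inr a) (Sum.inr b)) ∧
            (∀ i : Fin n, s.r (Sum.inl i) (Sum.inr i))}

/-- `rl(p,q)`: the number of connected components of `G(p,q)`. -/
noncomputable def rl {n : ℕ} (p q : Setoid (Fin n)) : ℕ :=
  Nat.card (Quotient (Gjoin p q))

/-- The graph `H_r(p,q)`: as `G(p,q)`, but `inl i ∼ inr i` only for 1-indexed points
`i = s+2,…,n`, i.e. for indices `≥ s+1` where `s = ⌊r/2⌋`. -/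
def Hrel {n : ℕ} (r : ℕ) (p q : Setoid (Fin n)) : Setoid (Fin n ⊕ Fin n) :=
  sInf {s | (∀ a b : Fin n, p.r a b → s.r (Sum.inl a) (Sum.inl b)) ∧
            (∀ a b : Fin n, q.r a b → s.r (Sum.inr a) (Sum.inr b)) ∧
            (∀ i : Fin n, r / 2 + 1 ≤ (i : ℕ) → s.r (Sum.inl i) (Sum.inr i))}

/-- `G(p,q)` is `r`-flawless: in `H_r(p,q)` the points `inl 1,…,inl (s+1)` are pairwise
inequivalent, the points `inr 1,…,inr (s+1)` are pairwise inequivalent, `inl i ∼ inr i`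
for all `1 ≤ i ≤ s`, and for odd `r` also `inl (s+1) ∼ inr (s+1)`. -/
def RFlawless {n : ℕ} (r : ℕ) (p q : Setoid (Fin n)) : Prop :=
  (∀ i j : Fin n, (i : ℕ) ≤ r / 2 → (j : ℕ) ≤ r / 2 →
      (Hrel r p q).r (Sum.inl i) (Sum.inl j) → i = j) ∧
  (∀ i j : Fin n, (i : ℕ) ≤ r / 2 → (j : ℕ) ≤ r / 2 →
      (Hrel r p q).r (Sum.inr i) (Sum.inr j) → i = j) ∧
  (∀ i : Fin n, (i : ℕ) < r / 2 → (Hrel r p q).r (Sum.inl i) (Sum.inr i)) ∧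
  (r % 2 = 1 → ∀ i : Fin n, (i : ℕ) = r / 2 → (Hrel r p q).r (Sum.inl i) (Sum.inr i))

/-- The matrix entry `e_r(p,q) = N^{rl(p,q)}` if `G(p,q)` is `r`-flawless, else `0`. -/
noncomputable def eEnt (N : ℕ) {n : ℕ} (r : ℕ) (p q : Setoid (Fin n)) : ℝ :=
  if RFlawless r p q then (N : ℝ) ^ rl p q else 0

/-- Deleting the point with index `k` (0-indexed) from a partition of `Fin n`,
relabelling the later points downwards. -/
def delPt {n : ℕ} (k : ℕ) (p : Setoid (Fin n)) : Setoid (Fin (n - 1)) :=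
  Setoid.comap (fun i : Fin (n - 1) =>
    if (i : ℕ) < k then ⟨(i : ℕ), by have := i.isLt; omega⟩
    else ⟨(i : ℕ) + 1, by have := i.isLt; omega⟩) p


namespace BAodd

/-- The embedding `Fin (n-1) → Fin n` skipping index `k` (matches `delPt`'s map). -/
def embF (n k : ℕ) (i : Fin (n - 1)) : Fin n :=
  if (i : ℕ) < k then ⟨(i : ℕ), by have := i.isLt; omega⟩
  else ⟨(i : ℕ) + 1, by have := i.isLt; omega⟩

lemma delPt_eq {n : ℕ} (k : ℕ) (p : Setoid (Fin n)) :
    delPt k p = Setoid.comap (embF n k) p := rfl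

lemma delPt_rel {n : ℕ} (k : ℕ) (p : Setoid (Fin n)) (i j : Fin (n - 1)) :
    (delPt k p).r i j ↔ p.r (embF n k i) (embF n k j) := Iff.rfl

/-- The retraction `Fin n → Fin (n-1)` collapsing `k+1` onto `k`. -/
def gF (n k : ℕ) (hk : k + 2 ≤ n) (a : Fin n) : Fin (n - 1) :=
  if h : (a : ℕ) ≤ k then ⟨(a : ℕ), by omega⟩
  else ⟨(a : ℕ) - 1, by have := a.isLt; omega⟩

lemma embF_val {n : ℕ} (k : ℕ) (i : Fin (n - 1)) :
    (embF n k i : ℕ) = if (i : ℕ) < k then (i : ℕ) else (i : ℕ) + 1 := by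
  unfold embF; split <;> rfl

lemma gF_val {n k : ℕ} (hk : k + 2 ≤ n) (a : Fin n) :
    (gF n k hk a : ℕ) = if (a : ℕ) ≤ k then (a : ℕ) else (a : ℕ) - 1 := by
  unfold gF; split <;> rfl

lemma gF_embF {n k : ℕ} (hk : k + 2 ≤ n) (i : Fin (n - 1)) :
    gF n k hk (embF n (k + 1) i) = i := by
  apply Fin.ext
  rw [gF_val, embF_val]
  have := i.isLt
  split_ifs <;> omega

lemma embF_gF {n k : ℕ} (hk : k + 2 ≤ n) (a : Fin n) (ha : (a : ℕ) ≠ k + 1) :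
    embF n (k + 1) (gF n k hk a) = a := by
  apply Fin.ext
  rw [embF_val, gF_val]
  have := a.isLt
  split_ifs <;> omega

lemma embF_gF_mid {n k : ℕ} (hk : k + 2 ≤ n) (a : Fin n) (ha : (a : ℕ) = k + 1) :
    embF n (k + 1) (gF n k hk a) = ⟨k, by omega⟩ := by
  apply Fin.ext
  rw [embF_val, gF_val]
  simp only [Fin.val_mk]
  split_ifs <;> omega

lemma embF_lt {n k : ℕ} {i j : Fin (n - 1)} (h : i < j) : embF n k i < embF n k j := by
  have h' : (i : ℕ) < (j : ℕ) := h
  show (embF n k i : ℕ) < (embF n k j : ℕ)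
  rw [embF_val, embF_val]
  split_ifs <;> omega

/-- Generalized `Hrel` with an arbitrary threshold `k`. -/
def Hgen {n : ℕ} (k : ℕ) (p q : Setoid (Fin n)) : Setoid (Fin n ⊕ Fin n) :=
  sInf {s | (∀ a b : Fin n, p.r a b → s.r (Sum.inl a) (Sum.inl b)) ∧
            (∀ a b : Fin n, q.r a b → s.r (Sum.inr a) (Sum.inr b)) ∧
            (∀ i : Fin n, k ≤ (i : ℕ) → s.r (Sum.inl i) (Sum.inr i))}

lemma Hrel_eq_Hgen {n : ℕ} (r : ℕ) (p q : Setoid (Fin n)) :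
    Hrel r p q = Hgen (r / 2 + 1) p q := rfl

lemma Gjoin_eq_Hgen {n : ℕ} (p q : Setoid (Fin n)) : Gjoin p q = Hgen 0 p q := by
  unfold Gjoin Hgen
  congr 1
  ext t
  exact ⟨fun ⟨h1, h2, h3⟩ => ⟨h1, h2, fun i _ => h3 i⟩,
    fun ⟨h1, h2, h3⟩ => ⟨h1, h2, fun i => h3 i (Nat.zero_le _)⟩⟩

lemma hgen_inl {n k : ℕ} {p q : Setoid (Fin n)} {a b : Fin n} (h : p.r a b) :
    (Hgen k p q).r (Sum.inl a) (Sum.inl b) := fun t ht => ht.1 a b h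

lemma hgen_inr {n k : ℕ} {p q : Setoid (Fin n)} {a b : Fin n} (h : q.r a b) :
    (Hgen k p q).r (Sum.inr a) (Sum.inr b) := fun t ht => ht.2.1 a b h

lemma hgen_mix {n k : ℕ} {p q : Setoid (Fin n)} {i : Fin n} (h : k ≤ (i : ℕ)) :
    (Hgen k p q).r (Sum.inl i) (Sum.inr i) := fun t ht => ht.2.2 i h

lemma hgen_mono {n : ℕ} {k k' : ℕ} (hk : k' ≤ k) {p q : Setoid (Fin n)}
    {x y : Fin n ⊕ Fin n} (h : (Hgen k p q).r x y) : (Hgen k' p q).r x y :=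
  fun t ht => h t ⟨ht.1, ht.2.1, fun i hi => ht.2.2 i (hk.trans hi)⟩

end BAodd
namespace BAodd

/-- Join of a setoid with one extra pair `(A,B)`. -/
def joinPair {β : Type*} (t : Setoid β) (A B : β) : Setoid β where
  r x y := t.r x y ∨ (t.r x A ∧ t.r B y) ∨ (t.r x B ∧ t.r A y)
  iseqv := by
    refine ⟨fun x => Or.inl (t.iseqv.refl x), ?_, ?_⟩
    · rintro x y (h | ⟨h1, h2⟩ | ⟨h1, h2⟩)
      · exact Or.inl (t.iseqv.symm h)
      · exact Or.inr (Or.inr ⟨t.iseqv.symm h2, t.iseqv.symm h1⟩)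
      · exact Or.inr (Or.inl ⟨t.iseqv.symm h2, t.iseqv.symm h1⟩)
    · rintro x y z (h | ⟨h1, h2⟩ | ⟨h1, h2⟩) (h' | ⟨h1', h2'⟩ | ⟨h1', h2'⟩)
      · exact Or.inl (t.iseqv.trans h h')
      · exact Or.inr (Or.inl ⟨t.iseqv.trans h h1', h2'⟩)
      · exact Or.inr (Or.inr ⟨t.iseqv.trans h h1', h2'⟩)
      · exact Or.inr (Or.inl ⟨h1, t.iseqv.trans h2 h'⟩)
      · exact Or.inl (t.iseqv.trans h1
          (t.iseqv.trans (t.iseqv.symm (t.iseqv.trans h2 h1')) h2'))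
      · exact Or.inl (t.iseqv.trans h1 h2')
      · exact Or.inr (Or.inr ⟨h1, t.iseqv.trans h2 h'⟩)
      · exact Or.inl (t.iseqv.trans h1 h2')
      · exact Or.inl (t.iseqv.trans h1
          (t.iseqv.trans (t.iseqv.symm (t.iseqv.trans h2 h1')) h2'))

lemma joinPair_rel {β : Type*} (t : Setoid β) (A B x y : β) :
    (joinPair t A B).r x y ↔
      t.r x y ∨ (t.r x A ∧ t.r B y) ∨ (t.r x B ∧ t.r A y) := Iff.rfl

lemma hgen_eq_joinPair {m : ℕ} (p q : Setoid (Fin m)) (s : ℕ) (hs : s < m) :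
    Hgen s p q = joinPair (Hgen (s + 1) p q) (Sum.inl ⟨s, hs⟩) (Sum.inr ⟨s, hs⟩) := by
  apply Setoid.ext
  intro x y
  constructor
  · intro h
    refine h (joinPair (Hgen (s + 1) p q) (Sum.inl ⟨s, hs⟩) (Sum.inr ⟨s, hs⟩)) ⟨?_, ?_, ?_⟩
    · exact fun a b hab => Or.inl (hgen_inl hab)
    · exact fun a b hab => Or.inl (hgen_inr hab)
    · intro i hi
      rcases Nat.eq_or_lt_of_le hi with heq | hlt
      · have hieq : i = ⟨s, hs⟩ := Fin.ext heq.symm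
        subst hieq
        exact Or.inr (Or.inl ⟨(Hgen (s + 1) p q).iseqv.refl _,
          (Hgen (s + 1) p q).iseqv.refl _⟩)
      · exact Or.inl (hgen_mix hlt)
  · have hAB : (Hgen s p q).r (Sum.inl ⟨s, hs⟩) (Sum.inr ⟨s, hs⟩) := hgen_mix (le_refl s)
    rintro (h | ⟨h1, h2⟩ | ⟨h1, h2⟩)
    · exact hgen_mono (Nat.le_succ s) h
    · exact (Hgen s p q).iseqv.trans (hgen_mono (Nat.le_succ s) h1)
        ((Hgen s p q).iseqv.trans hAB (hgen_mono (Nat.le_succ s) h2))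
    · exact (Hgen s p q).iseqv.trans (hgen_mono (Nat.le_succ s) h1)
        ((Hgen s p q).iseqv.trans ((Hgen s p q).iseqv.symm hAB)
          (hgen_mono (Nat.le_succ s) h2))

section Transport

variable {n : ℕ} {s : ℕ} (hs : s + 2 ≤ n) (p q : Setoid (Fin n))

lemma rel_emb_g (hp : p.r ⟨s, by omega⟩ ⟨s + 1, by omega⟩) (a : Fin n) :
    p.r a (embF n (s + 1) (gF n s hs a)) := by
  by_cases h : (a : ℕ) = s + 1
  · rw [embF_gF_mid hs a h]
    have hb : s + 1 < n := by omega
    have ha : a = ⟨s + 1, hb⟩ := Fin.ext h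
    subst ha
    exact p.iseqv.symm hp
  · rw [embF_gF hs a h]

lemma hgen_push (hp : p.r ⟨s, by omega⟩ ⟨s + 1, by omega⟩)
    (hq : q.r ⟨s, by omega⟩ ⟨s + 1, by omega⟩) (a b : ℕ)
    (hab : ∀ i : Fin n, a ≤ (i : ℕ) → b ≤ (gF n s hs i : ℕ)) {x y : Fin n ⊕ Fin n}
    (h : (Hgen a p q).r x y) :
    (Hgen b (delPt (s + 1) p) (delPt (s + 1) q)).r
      (Sum.map (gF n s hs) (gF n s hs) x) (Sum.map (gF n s hs) (gF n s hs) y) := by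
  exact h (Setoid.comap (Sum.map (gF n s hs) (gF n s hs))
      (Hgen b (delPt (s + 1) p) (delPt (s + 1) q)))
    ⟨fun a' b' hab' => hgen_inl (show (delPt (s + 1) p).r _ _ from
        p.iseqv.trans (p.iseqv.symm (rel_emb_g hs p hp a'))
          (p.iseqv.trans hab' (rel_emb_g hs p hp b'))),
     fun a' b' hab' => hgen_inr (show (delPt (s + 1) q).r _ _ from
        q.iseqv.trans (q.iseqv.symm (rel_emb_g hs q hq a'))
          (q.iseqv.trans hab' (rel_emb_g hs q hq b'))),
     fun i hi => hgen_mix (hab i hi)⟩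

lemma hgen_pull (a b : ℕ)
    (hcov : ∀ j : Fin (n - 1), b ≤ (j : ℕ) →
      (Hgen a p q).r (Sum.inl (embF n (s + 1) j)) (Sum.inr (embF n (s + 1) j)))
    {u v : Fin (n - 1) ⊕ Fin (n - 1)}
    (h : (Hgen b (delPt (s + 1) p) (delPt (s + 1) q)).r u v) :
    (Hgen a p q).r (Sum.map (embF n (s + 1)) (embF n (s + 1)) u)
      (Sum.map (embF n (s + 1)) (embF n (s + 1)) v) := by
  exact h (Setoid.comap (Sum.map (embF n (s + 1)) (embF n (s + 1))) (Hgen a p q))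
    ⟨fun a' b' hab' => hgen_inl hab', fun a' b' hab' => hgen_inr hab', hcov⟩

lemma hgen_point (hp : p.r ⟨s, by omega⟩ ⟨s + 1, by omega⟩)
    (hq : q.r ⟨s, by omega⟩ ⟨s + 1, by omega⟩) (a : ℕ) (x : Fin n ⊕ Fin n) :
    (Hgen a p q).r x (Sum.map (embF n (s + 1)) (embF n (s + 1))
      (Sum.map (gF n s hs) (gF n s hs) x)) := by
  cases x with
  | inl c => exact hgen_inl (rel_emb_g hs p hp c)
  | inr c => exact hgen_inr (rel_emb_g hs q hq c)

lemma sum_g_emb (u : Fin (n - 1) ⊕ Fin (n - 1)) :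
    Sum.map (gF n s hs) (gF n s hs) (Sum.map (embF n (s + 1)) (embF n (s + 1)) u) = u := by
  cases u <;> simp [gF_embF hs]

lemma hgen_transport_iff1 (hp : p.r ⟨s, by omega⟩ ⟨s + 1, by omega⟩)
    (hq : q.r ⟨s, by omega⟩ ⟨s + 1, by omega⟩) (a b : ℕ)
    (hab : ∀ i : Fin n, a ≤ (i : ℕ) → b ≤ (gF n s hs i : ℕ))
    (hcov : ∀ j : Fin (n - 1), b ≤ (j : ℕ) →
      (Hgen a p q).r (Sum.inl (embF n (s + 1) j)) (Sum.inr (embF n (s + 1) j)))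
    (x y : Fin n ⊕ Fin n) :
    (Hgen a p q).r x y ↔
      (Hgen b (delPt (s + 1) p) (delPt (s + 1) q)).r
        (Sum.map (gF n s hs) (gF n s hs) x) (Sum.map (gF n s hs) (gF n s hs) y) := by
  constructor
  · exact hgen_push hs p q hp hq a b hab
  · intro h
    have h2 := hgen_pull p q a b hcov h
    exact (Hgen a p q).iseqv.trans (hgen_point hs p q hp hq a x)
      ((Hgen a p q).iseqv.trans h2
        ((Hgen a p q).iseqv.symm (hgen_point hs p q hp hq a y)))

lemma hgen_transport_iff2 (hp : p.r ⟨s, by omega⟩ ⟨s + 1, by omega⟩)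
    (hq : q.r ⟨s, by omega⟩ ⟨s + 1, by omega⟩) (a b : ℕ)
    (hab : ∀ i : Fin n, a ≤ (i : ℕ) → b ≤ (gF n s hs i : ℕ))
    (hcov : ∀ j : Fin (n - 1), b ≤ (j : ℕ) →
      (Hgen a p q).r (Sum.inl (embF n (s + 1) j)) (Sum.inr (embF n (s + 1) j)))
    (u v : Fin (n - 1) ⊕ Fin (n - 1)) :
    (Hgen b (delPt (s + 1) p) (delPt (s + 1) q)).r u v ↔
      (Hgen a p q).r (Sum.map (embF n (s + 1)) (embF n (s + 1)) u)
        (Sum.map (embF n (s + 1)) (embF n (s + 1)) v) := by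
  constructor
  · exact hgen_pull p q a b hcov
  · intro h
    have h2 := hgen_push hs p q hp hq a b hab h
    rwa [sum_g_emb hs, sum_g_emb hs] at h2

end Transport

end BAodd
namespace BAodd

variable {n r : ℕ}

lemma mem_W_iff (hodd : r % 2 = 1) (p : Setoid (Fin n)) :
    p ∈ Wset n r ↔ ¬ IsCrossing p ∧
      (∀ i : Fin n, (i : ℕ) < r / 2 + 1 → ¬ IsSingletonPt p i) ∧
      (∀ i j : Fin n, (i : ℕ) ≤ r / 2 → (j : ℕ) ≤ r / 2 → p.r i j → i = j) := by
  simp [Wset, hodd]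

lemma mem_W_succ_iff (hodd : r % 2 = 1) (p : Setoid (Fin n)) :
    p ∈ Wset n (r + 1) ↔ ¬ IsCrossing p ∧
      (∀ i : Fin n, (i : ℕ) < r / 2 + 1 → ¬ IsSingletonPt p i) ∧
      (∀ i j : Fin n, (i : ℕ) ≤ r / 2 + 1 → (j : ℕ) ≤ r / 2 + 1 → p.r i j → i = j) := by
  simp [Wset, show (r + 1) % 2 = 0 by omega, show (r + 1) / 2 = r / 2 + 1 by omega]

lemma mem_W_pred_iff (hodd : r % 2 = 1) (p : Setoid (Fin (n - 1))) :
    p ∈ Wset (n - 1) (r - 1) ↔ ¬ IsCrossing p ∧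
      (∀ i : Fin (n - 1), (i : ℕ) < r / 2 → ¬ IsSingletonPt p i) ∧
      (∀ i j : Fin (n - 1), (i : ℕ) ≤ r / 2 → (j : ℕ) ≤ r / 2 → p.r i j → i = j) := by
  simp [Wset, show (r - 1) % 2 = 0 by omega, show (r - 1) / 2 = r / 2 by omega]

lemma part_a (hodd : r % 2 = 1) (hrn : r < n - 1) (p : Setoid (Fin n))
    (hp : p ∈ Yset n r) : p.r ⟨r / 2, by omega⟩ ⟨r / 2 + 1, by omega⟩ := by
  have hb1 : r / 2 < n := by omega
  have hb2 : r / 2 + 1 < n := by omega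
  obtain ⟨hpW, hpNW⟩ := hp
  rw [mem_W_iff hodd] at hpW
  obtain ⟨hNC, hSing, hDist⟩ := hpW
  rw [mem_W_succ_iff hodd] at hpNW
  have hne : ¬ (∀ i j : Fin n, (i : ℕ) ≤ r / 2 + 1 → (j : ℕ) ≤ r / 2 + 1 →
      p.r i j → i = j) := fun hC => hpNW ⟨hNC, hSing, hC⟩
  push_neg at hne
  obtain ⟨i, j, hi, hj, hrel, hij⟩ := hne
  have key : ∀ k : Fin n, (k : ℕ) ≤ r / 2 → p.r ⟨r / 2 + 1, by omega⟩ k → (k : ℕ) = r / 2 := by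
    intro k hk hrelk
    by_contra hk'
    have hklt : (k : ℕ) < r / 2 := by omega
    have hnsing := hSing ⟨r / 2, by omega⟩ (by simp)
    unfold IsSingletonPt at hnsing
    push_neg at hnsing
    obtain ⟨m, hm, hmne⟩ := hnsing
    rcases Nat.lt_or_ge (m : ℕ) (r / 2 + 1) with hmlt | hmge
    · exact hmne (hDist m ⟨r / 2, by omega⟩ (by omega) (by simp) (p.iseqv.symm hm))
    · rcases Nat.eq_or_lt_of_le hmge with hmeq | hmgt
      · have hm' : m = ⟨r / 2 + 1, by omega⟩ := Fin.ext hmeq.symm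
        rw [hm'] at hm
        have := hDist ⟨r / 2, by omega⟩ k (by simp) hk (p.iseqv.trans hm hrelk)
        have : (r : ℕ) / 2 = (k : ℕ) := congrArg Fin.val this
        omega
      · apply hNC
        refine ⟨k, ⟨r / 2, by omega⟩, ⟨r / 2 + 1, by omega⟩, m, ?_, ?_, ?_,
          p.iseqv.symm hrelk, hm, ?_⟩
        · show (k : ℕ) < r / 2; exact hklt
        · show r / 2 < r / 2 + 1; omega
        · show r / 2 + 1 < (m : ℕ); omega
        · intro hkab
          have := hDist k ⟨r / 2, by omega⟩ (by omega) (by simp) hkab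
          have : (k : ℕ) = r / 2 := by rw [this]
          omega
  rcases Nat.eq_or_lt_of_le hi with hieq | hilt
  · have hi' : i = ⟨r / 2 + 1, hb2⟩ := Fin.ext hieq
    subst hi'
    have hjle : (j : ℕ) ≤ r / 2 := by
      rcases Nat.eq_or_lt_of_le hj with hjeq | hjlt
      · exact absurd (Fin.ext hjeq : j = ⟨r / 2 + 1, hb2⟩).symm hij
      · omega
    have hjv := key j hjle hrel
    have hj' : j = ⟨r / 2, by omega⟩ := Fin.ext hjv
    rw [hj'] at hrel
    exact p.iseqv.symm hrel
  · have hile : (i : ℕ) ≤ r / 2 := by omega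
    rcases Nat.eq_or_lt_of_le hj with hjeq | hjlt
    · have hj' : j = ⟨r / 2 + 1, hb2⟩ := Fin.ext hjeq
      subst hj'
      have hiv := key i hile (p.iseqv.symm hrel)
      have hi' : i = ⟨r / 2, by omega⟩ := Fin.ext hiv
      rw [hi'] at hrel
      exact hrel
    · exact absurd (hDist i j hile (by omega) hrel) hij

end BAodd
namespace BAodd

variable {n r : ℕ}

lemma mapsTo (hodd : r % 2 = 1) (hrn : r < n - 1) :
    Set.MapsTo (delPt (r / 2 + 1)) (Yset n r) (Wset (n - 1) (r - 1)) := by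
  intro p hp
  have hs : r / 2 + 2 ≤ n := by omega
  have hpa := part_a hodd hrn p hp
  obtain ⟨hpW, -⟩ := hp
  rw [mem_W_iff hodd] at hpW
  obtain ⟨hNC, hSing, hDist⟩ := hpW
  rw [mem_W_pred_iff hodd]
  refine ⟨?_, ?_, ?_⟩
  · rintro ⟨a, b, c, d, h1, h2, h3, hac, hbd, hnab⟩
    exact hNC ⟨embF n (r / 2 + 1) a, embF n (r / 2 + 1) b, embF n (r / 2 + 1) c,
      embF n (r / 2 + 1) d, embF_lt h1, embF_lt h2, embF_lt h3, hac, hbd, hnab⟩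
  · intro i hi hsing
    have hbnd : (embF n (r / 2 + 1) i : ℕ) < r / 2 + 1 := by
      rw [embF_val]; split_ifs <;> omega
    apply hSing _ hbnd
    intro j hj
    by_cases hj1 : (j : ℕ) = r / 2 + 1
    · exfalso
      have hj' : j = ⟨r / 2 + 1, by omega⟩ := Fin.ext hj1
      rw [hj'] at hj
      have h4 : p.r (embF n (r / 2 + 1) i) ⟨r / 2, by omega⟩ :=
        p.iseqv.trans hj (p.iseqv.symm hpa)
      have h5 := hDist _ _ (Nat.lt_succ_iff.mp hbnd)
        (by simp only [Fin.val_mk]; omega) h4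
      have h6 : (embF n (r / 2 + 1) i : ℕ) = r / 2 := by
        rw [h5]
      rw [embF_val] at h6; split_ifs at h6 <;> omega
    · have hje := embF_gF hs j hj1
      have h2 : (delPt (r / 2 + 1) p).r i (gF n (r / 2) hs j) := by
        show p.r (embF n (r / 2 + 1) i) (embF n (r / 2 + 1) (gF n (r / 2) hs j))
        rw [hje]; exact hj
      have h3 := hsing _ h2
      rw [← hje, h3]
  · intro i j hi hj hrel
    have hbi : (embF n (r / 2 + 1) i : ℕ) ≤ r / 2 := by rw [embF_val]; split_ifs <;> omega
    have hbj : (embF n (r / 2 + 1) j : ℕ) ≤ r / 2 := by rw [embF_val]; split_ifs <;> omega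
    have h1 := hDist (embF n (r / 2 + 1) i) (embF n (r / 2 + 1) j) hbi hbj hrel
    have h2 : (embF n (r / 2 + 1) i : ℕ) = (embF n (r / 2 + 1) j : ℕ) := by rw [h1]
    apply Fin.ext
    rw [embF_val, embF_val] at h2
    split_ifs at h2 <;> omega

lemma injOn (hodd : r % 2 = 1) (hrn : r < n - 1) :
    Set.InjOn (delPt (r / 2 + 1)) (Yset n r) := by
  intro p1 h1 p2 h2 heq
  have hs : r / 2 + 2 ≤ n := by omega
  have ha1 := part_a hodd hrn p1 h1
  have ha2 := part_a hodd hrn p2 h2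
  apply Setoid.ext; intro a b
  have e1 : ∀ p : Setoid (Fin n), p.r ⟨r / 2, by omega⟩ ⟨r / 2 + 1, by omega⟩ →
      ∀ a b : Fin n, (p.r a b ↔
        p.r (embF n (r / 2 + 1) (gF n (r / 2) hs a)) (embF n (r / 2 + 1) (gF n (r / 2) hs b))) := by
    intro p hpa a b
    constructor
    · intro h
      exact p.iseqv.trans (p.iseqv.symm (rel_emb_g hs p hpa a))
        (p.iseqv.trans h (rel_emb_g hs p hpa b))
    · intro h
      exact p.iseqv.trans (rel_emb_g hs p hpa a)
        (p.iseqv.trans h (p.iseqv.symm (rel_emb_g hs p hpa b)))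
  rw [e1 p1 ha1 a b, e1 p2 ha2 a b]
  show (delPt (r / 2 + 1) p1).r (gF n (r / 2) hs a) (gF n (r / 2) hs b) ↔
    (delPt (r / 2 + 1) p2).r (gF n (r / 2) hs a) (gF n (r / 2) hs b)
  rw [heq]

lemma surjOn (hodd : r % 2 = 1) (hrn : r < n - 1) :
    Set.SurjOn (delPt (r / 2 + 1)) (Yset n r) (Wset (n - 1) (r - 1)) := by
  intro q hq
  have hs : r / 2 + 2 ≤ n := by omega
  rw [mem_W_pred_iff hodd] at hq
  obtain ⟨hNC, hSing, hDist⟩ := hq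
  refine ⟨Setoid.comap (gF n (r / 2) hs) q, ⟨?_, ?_⟩, ?_⟩
  · rw [mem_W_iff hodd]
    refine ⟨?_, ?_, ?_⟩
    · rintro ⟨a, b, c, d, h1, h2, h3, hac, hbd, hnab⟩
      apply hNC
      have gmono : ∀ x y : Fin n, x < y →
          (gF n (r / 2) hs x : ℕ) ≤ (gF n (r / 2) hs y : ℕ) := by
        intro x y hxy
        have hxy' : (x : ℕ) < (y : ℕ) := hxy
        rw [gF_val, gF_val]; split_ifs <;> omega
      have hne_ab : gF n (r / 2) hs a ≠ gF n (r / 2) hs b := by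
        intro h; apply hnab
        show q.r (gF n (r / 2) hs a) (gF n (r / 2) hs b)
        rw [h]
      have hne_bc : gF n (r / 2) hs b ≠ gF n (r / 2) hs c := by
        intro h; apply hnab
        show q.r (gF n (r / 2) hs a) (gF n (r / 2) hs b)
        rw [h]; exact hac
      have hne_cd : gF n (r / 2) hs c ≠ gF n (r / 2) hs d := by
        intro h; apply hnab
        have hbd' : q.r (gF n (r / 2) hs b) (gF n (r / 2) hs c) := by
          rw [h]; exact hbd
        exact q.iseqv.trans hac (q.iseqv.symm hbd')
      have hv_ab : (gF n (r / 2) hs a : ℕ) ≠ (gF n (r / 2) hs b : ℕ) :=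
        fun hv => hne_ab (Fin.ext hv)
      have hv_bc : (gF n (r / 2) hs b : ℕ) ≠ (gF n (r / 2) hs c : ℕ) :=
        fun hv => hne_bc (Fin.ext hv)
      have hv_cd : (gF n (r / 2) hs c : ℕ) ≠ (gF n (r / 2) hs d : ℕ) :=
        fun hv => hne_cd (Fin.ext hv)
      refine ⟨gF n (r / 2) hs a, gF n (r / 2) hs b, gF n (r / 2) hs c, gF n (r / 2) hs d,
        ?_, ?_, ?_, hac, hbd, hnab⟩
      · exact Fin.lt_def.mpr (by have := gmono a b h1; omega)
      · exact Fin.lt_def.mpr (by have := gmono b c h2; omega)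
      · exact Fin.lt_def.mpr (by have := gmono c d h3; omega)
    · intro i hi hsing
      rcases Nat.eq_or_lt_of_le (Nat.lt_succ_iff.mp hi) with hieq | hilt
      · have hrel : q.r (gF n (r / 2) hs i) (gF n (r / 2) hs ⟨r / 2 + 1, by omega⟩) := by
          have : gF n (r / 2) hs i = gF n (r / 2) hs ⟨r / 2 + 1, by omega⟩ := by
            apply Fin.ext; rw [gF_val, gF_val]
            simp only [Fin.val_mk]
            split_ifs <;> omega
          rw [this]
        have := hsing ⟨r / 2 + 1, by omega⟩ hrel
        have hval : r / 2 + 1 = (i : ℕ) := congrArg Fin.val this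
        omega
      · apply hSing ⟨(i : ℕ), by omega⟩ (by simp only [Fin.val_mk]; omega)
        intro j hj
        have hgi : gF n (r / 2) hs i = ⟨(i : ℕ), by omega⟩ := by
          apply Fin.ext; rw [gF_val]; simp only [Fin.val_mk]; split_ifs <;> omega
        have h2 : (Setoid.comap (gF n (r / 2) hs) q).r i (embF n (r / 2 + 1) j) := by
          show q.r (gF n (r / 2) hs i) (gF n (r / 2) hs (embF n (r / 2 + 1) j))
          rw [gF_embF hs, hgi]; exact hj
        have h3 := hsing _ h2
        rw [← gF_embF hs j, h3, hgi]
    · intro i j hi hj hrel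
      have hgi : gF n (r / 2) hs i = ⟨(i : ℕ), by omega⟩ := by
        apply Fin.ext; rw [gF_val]; simp only [Fin.val_mk]; split_ifs <;> omega
      have hgj : gF n (r / 2) hs j = ⟨(j : ℕ), by omega⟩ := by
        apply Fin.ext; rw [gF_val]; simp only [Fin.val_mk]; split_ifs <;> omega
      have hrel' : q.r (gF n (r / 2) hs i) (gF n (r / 2) hs j) := hrel
      rw [hgi, hgj] at hrel'
      have := hDist _ _ (by simp only [Fin.val_mk]; omega) (by simp only [Fin.val_mk]; omega) hrel'
      have hval := congrArg Fin.val this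
      exact Fin.ext hval
  · intro hW
    rw [mem_W_succ_iff hodd] at hW
    obtain ⟨-, -, hC⟩ := hW
    have hrel : (Setoid.comap (gF n (r / 2) hs) q).r ⟨r / 2, by omega⟩ ⟨r / 2 + 1, by omega⟩ := by
      show q.r (gF n (r / 2) hs ⟨r / 2, by omega⟩) (gF n (r / 2) hs ⟨r / 2 + 1, by omega⟩)
      have : gF n (r / 2) hs (⟨r / 2, by omega⟩ : Fin n) =
          gF n (r / 2) hs (⟨r / 2 + 1, by omega⟩ : Fin n) := by
        apply Fin.ext; rw [gF_val, gF_val]; simp only [Fin.val_mk]; split_ifs <;> omega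
      rw [this]
    have := hC _ _ (by simp only [Fin.val_mk]; omega) (by simp only [Fin.val_mk]; omega) hrel
    have hval : r / 2 = r / 2 + 1 := congrArg Fin.val this
    omega
  · apply Setoid.ext; intro i j
    show q.r (gF n (r / 2) hs (embF n (r / 2 + 1) i)) (gF n (r / 2) hs (embF n (r / 2 + 1) j)) ↔
      q.r i j
    rw [gF_embF hs, gF_embF hs]

lemma bijOn (hodd : r % 2 = 1) (hrn : r < n - 1) :
    Set.BijOn (delPt (r / 2 + 1)) (Yset n r) (Wset (n - 1) (r - 1)) :=
  ⟨mapsTo hodd hrn, injOn hodd hrn, surjOn hodd hrn⟩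

end BAodd
namespace BAodd

variable {n r : ℕ}

lemma rl_eq (hodd : r % 2 = 1) (hrn : r < n - 1) (p q : Setoid (Fin n))
    (hpa : p.r ⟨r / 2, by omega⟩ ⟨r / 2 + 1, by omega⟩)
    (hqa : q.r ⟨r / 2, by omega⟩ ⟨r / 2 + 1, by omega⟩) :
    rl p q = rl (delPt (r / 2 + 1) p) (delPt (r / 2 + 1) q) := by
  have hs : r / 2 + 2 ≤ n := by omega
  unfold rl
  rw [Gjoin_eq_Hgen p q, Gjoin_eq_Hgen (delPt (r / 2 + 1) p) (delPt (r / 2 + 1) q)]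
  apply Nat.card_congr
  have hab : ∀ i : Fin n, 0 ≤ (i : ℕ) → 0 ≤ (gF n (r / 2) hs i : ℕ) := fun _ _ => Nat.zero_le _
  have hcov : ∀ j : Fin (n - 1), 0 ≤ (j : ℕ) →
      (Hgen 0 p q).r (Sum.inl (embF n (r / 2 + 1) j)) (Sum.inr (embF n (r / 2 + 1) j)) :=
    fun j _ => hgen_mix (Nat.zero_le _)
  refine
    { toFun := Quotient.map' (Sum.map (gF n (r / 2) hs) (gF n (r / 2) hs))
        (fun x y h => hgen_push hs p q hpa hqa 0 0 hab h)
      invFun := Quotient.map' (Sum.map (embF n (r / 2 + 1)) (embF n (r / 2 + 1)))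
        (fun u v h => hgen_pull p q 0 0 hcov h)
      left_inv := ?_
      right_inv := ?_ }
  · intro x
    induction x using Quotient.inductionOn' with
    | h x =>
      simp only [Quotient.map'_mk'']
      exact Quotient.sound' ((Hgen 0 p q).iseqv.symm (hgen_point hs p q hpa hqa 0 x))
  · intro u
    induction u using Quotient.inductionOn' with
    | h u =>
      simp only [Quotient.map'_mk'']
      rw [sum_g_emb hs u]

end BAodd
namespace BAodd

variable {n r : ℕ}

lemma flaw_iff (hodd : r % 2 = 1) (hrn : r < n - 1) (p q : Setoid (Fin n))
    (hp : p ∈ Yset n r) (hq : q ∈ Yset n r) :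
    RFlawless r p q ↔ RFlawless (r - 1) (delPt (r / 2 + 1) p) (delPt (r / 2 + 1) q) := by
  have hs : r / 2 + 2 ≤ n := by omega
  have hs' : r / 2 < n - 1 := by omega
  have hsn : r / 2 < n := by omega
  have hpa := part_a hodd hrn p hp
  have hqa := part_a hodd hrn q hq
  have hH' : Hrel (r - 1) (delPt (r / 2 + 1) p) (delPt (r / 2 + 1) q) =
      Hgen (r / 2 + 1) (delPt (r / 2 + 1) p) (delPt (r / 2 + 1) q) := by
    rw [Hrel_eq_Hgen, show (r - 1) / 2 = r / 2 from by omega]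
  have hab : ∀ i : Fin n, r / 2 + 1 ≤ (i : ℕ) → r / 2 ≤ (gF n (r / 2) hs i : ℕ) := by
    intro i hi; rw [gF_val]; split_ifs <;> omega
  have hsmid : (Hgen (r / 2 + 1) p q).r (Sum.inl ⟨r / 2, hsn⟩) (Sum.inr ⟨r / 2, hsn⟩) := by
    refine (Hgen (r / 2 + 1) p q).iseqv.trans (hgen_inl hpa)
      ((Hgen (r / 2 + 1) p q).iseqv.trans
        (hgen_mix (by simp only [Fin.val_mk]; exact le_rfl : r / 2 + 1 ≤ ((⟨r / 2 + 1, by omega⟩ : Fin n) : ℕ)))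
        (hgen_inr (q.iseqv.symm hqa)))
  have hcov : ∀ j : Fin (n - 1), r / 2 ≤ (j : ℕ) →
      (Hgen (r / 2 + 1) p q).r (Sum.inl (embF n (r / 2 + 1) j))
        (Sum.inr (embF n (r / 2 + 1) j)) := by
    intro j hj
    rcases Nat.eq_or_lt_of_le hj with heq | hlt
    · have hej : embF n (r / 2 + 1) j = ⟨r / 2, hsn⟩ := by
        apply Fin.ext; rw [embF_val]; simp only [Fin.val_mk]; split_ifs <;> omega
      rw [hej]; exact hsmid
    · apply hgen_mix
      rw [embF_val]; split_ifs <;> omega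
  have iff1 := hgen_transport_iff1 hs p q hpa hqa (r / 2 + 1) (r / 2) hab hcov
  have iff2 := hgen_transport_iff2 hs p q hpa hqa (r / 2 + 1) (r / 2) hab hcov
  have hjp := hgen_eq_joinPair (delPt (r / 2 + 1) p) (delPt (r / 2 + 1) q) (r / 2) hs'
  -- value lemmas
  have gval : ∀ i : Fin n, (i : ℕ) ≤ r / 2 → (gF n (r / 2) hs i : ℕ) = (i : ℕ) := by
    intro i hi; rw [gF_val]; split_ifs <;> omega
  have eval : ∀ j : Fin (n - 1), (j : ℕ) ≤ r / 2 → (embF n (r / 2 + 1) j : ℕ) = (j : ℕ) := by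
    intro j hj; rw [embF_val]; split_ifs <;> omega
  constructor
  · rintro ⟨f1, f2, f3, f4⟩
    -- J'-level inequality conditions
    have hL' : ∀ i j : Fin (n - 1), (i : ℕ) ≤ r / 2 → (j : ℕ) ≤ r / 2 →
        (Hgen (r / 2) (delPt (r / 2 + 1) p) (delPt (r / 2 + 1) q)).r (Sum.inl i) (Sum.inl j) →
        i = j := by
      intro i j hi hj h
      have h3 := (iff2 (Sum.inl i) (Sum.inl j)).mp h
      have h4 := f1 (embF n (r / 2 + 1) i) (embF n (r / 2 + 1) j)
        (by rw [eval i hi]; exact hi) (by rw [eval j hj]; exact hj) h3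
      have h5 := congrArg Fin.val h4
      rw [eval i hi, eval j hj] at h5
      exact Fin.ext h5
    have hR' : ∀ i j : Fin (n - 1), (i : ℕ) ≤ r / 2 → (j : ℕ) ≤ r / 2 →
        (Hgen (r / 2) (delPt (r / 2 + 1) p) (delPt (r / 2 + 1) q)).r (Sum.inr i) (Sum.inr j) →
        i = j := by
      intro i j hi hj h
      have h3 := (iff2 (Sum.inr i) (Sum.inr j)).mp h
      have h4 := f2 (embF n (r / 2 + 1) i) (embF n (r / 2 + 1) j)
        (by rw [eval i hi]; exact hi) (by rw [eval j hj]; exact hj) h3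
      have h5 := congrArg Fin.val h4
      rw [eval i hi, eval j hj] at h5
      exact Fin.ext h5
    refine ⟨?_, ?_, ?_, ?_⟩
    · intro i j hi hj hrel
      rw [hH'] at hrel
      exact hL' i j (by omega) (by omega) (hgen_mono (by omega) hrel)
    · intro i j hi hj hrel
      rw [hH'] at hrel
      exact hR' i j (by omega) (by omega) (hgen_mono (by omega) hrel)
    · intro i hi
      rw [hH']
      have hi' : (i : ℕ) < r / 2 := by omega
      have h3 := f3 (embF n (r / 2 + 1) i) (by rw [eval i (le_of_lt hi')]; exact hi')
      have h4 := (iff1 (Sum.inl (embF n (r / 2 + 1) i)) (Sum.inr (embF n (r / 2 + 1) i))).mp h3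
      rw [show Sum.map (gF n (r / 2) hs) (gF n (r / 2) hs)
            (Sum.inl (embF n (r / 2 + 1) i)) = Sum.inl i from by rw [Sum.map_inl, gF_embF hs],
          show Sum.map (gF n (r / 2) hs) (gF n (r / 2) hs)
            (Sum.inr (embF n (r / 2 + 1) i)) = Sum.inr i from by rw [Sum.map_inr, gF_embF hs],
          hjp] at h4
      rcases h4 with h | ⟨h1, h2⟩ | ⟨h1, h2⟩
      · exact h
      · exfalso
        have := hL' i ⟨r / 2, hs'⟩ (le_of_lt hi') (by simp only [Fin.val_mk]; exact le_rfl)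
          (hgen_mono (Nat.le_succ _) h1)
        have hv := congrArg Fin.val this
        simp only [Fin.val_mk] at hv
        omega
      · exfalso
        have hAB : (Hgen (r / 2) (delPt (r / 2 + 1) p) (delPt (r / 2 + 1) q)).r
            (Sum.inl (⟨r / 2, hs'⟩ : Fin (n - 1))) (Sum.inr ⟨r / 2, hs'⟩) :=
          hgen_mix (by simp only [Fin.val_mk]; exact le_rfl)
        have h5 : (Hgen (r / 2) (delPt (r / 2 + 1) p) (delPt (r / 2 + 1) q)).r
            (Sum.inl i) (Sum.inl ⟨r / 2, hs'⟩) :=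
          (Hgen _ _ _).iseqv.trans (hgen_mono (Nat.le_succ _) h1) ((Hgen _ _ _).iseqv.symm hAB)
        have := hL' i ⟨r / 2, hs'⟩ (le_of_lt hi') (by simp only [Fin.val_mk]; exact le_rfl) h5
        have hv := congrArg Fin.val this
        simp only [Fin.val_mk] at hv
        omega
    · intro h0
      exact absurd h0 (by omega)
  · rintro ⟨f1', f2', f3', -⟩
    have g1 : ∀ i j : Fin (n - 1), (i : ℕ) ≤ r / 2 → (j : ℕ) ≤ r / 2 →
        (Hgen (r / 2 + 1) (delPt (r / 2 + 1) p) (delPt (r / 2 + 1) q)).r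
          (Sum.inl i) (Sum.inl j) → i = j := by
      intro i j hi hj h
      exact f1' i j (by omega) (by omega) (by rw [hH']; exact h)
    have g2 : ∀ i j : Fin (n - 1), (i : ℕ) ≤ r / 2 → (j : ℕ) ≤ r / 2 →
        (Hgen (r / 2 + 1) (delPt (r / 2 + 1) p) (delPt (r / 2 + 1) q)).r
          (Sum.inr i) (Sum.inr j) → i = j := by
      intro i j hi hj h
      exact f2' i j (by omega) (by omega) (by rw [hH']; exact h)
    have g3 : ∀ i : Fin (n - 1), (i : ℕ) < r / 2 →
        (Hgen (r / 2 + 1) (delPt (r / 2 + 1) p) (delPt (r / 2 + 1) q)).r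
          (Sum.inl i) (Sum.inr i) := by
      intro i hi
      have := f3' i (by omega)
      rw [hH'] at this
      exact this
    refine ⟨?_, ?_, ?_, ?_⟩
    · intro i j hi hj hrel
      have h2 := (iff1 (Sum.inl i) (Sum.inl j)).mp hrel
      simp only [Sum.map_inl, Sum.map_inr] at h2
      rw [hjp] at h2
      have hgiv := gval i hi
      have hgjv := gval j hj
      rcases h2 with h | ⟨h1, h2⟩ | ⟨h1, h2⟩
      · have := g1 _ _ (by omega) (by omega) h
        have hv := congrArg Fin.val this
        rw [hgiv, hgjv] at hv
        exact Fin.ext hv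
      · have e1 := g1 _ _ (by omega) (by simp only [Fin.val_mk]; exact le_rfl) h1
        have hvi := congrArg Fin.val e1
        rw [hgiv] at hvi
        simp only [Fin.val_mk] at hvi
        have e2 : (gF n (r / 2) hs j : ℕ) = r / 2 := by
          by_contra hne
          have hjlt : (gF n (r / 2) hs j : ℕ) < r / 2 := by omega
          have e3 := g3 _ hjlt
          have e4 := g2 ⟨r / 2, hs'⟩ (gF n (r / 2) hs j) (by simp only [Fin.val_mk]; exact le_rfl)
            (le_of_lt hjlt) ((Hgen _ _ _).iseqv.trans h2 e3)
          have hv := congrArg Fin.val e4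
          simp only [Fin.val_mk] at hv
          omega
        rw [hgjv] at e2
        apply Fin.ext
        omega
      · have e1 := g1 ⟨r / 2, hs'⟩ _ (by simp only [Fin.val_mk]; exact le_rfl) (by omega) h2
        have hvj := congrArg Fin.val e1
        rw [hgjv] at hvj
        simp only [Fin.val_mk] at hvj
        have e2 : (gF n (r / 2) hs i : ℕ) = r / 2 := by
          by_contra hne
          have hilt : (gF n (r / 2) hs i : ℕ) < r / 2 := by omega
          have e3 := g3 _ hilt
          have e4 := g2 (gF n (r / 2) hs i) ⟨r / 2, hs'⟩ (le_of_lt hilt)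
            (by simp only [Fin.val_mk]; exact le_rfl)
            ((Hgen _ _ _).iseqv.trans ((Hgen _ _ _).iseqv.symm e3) h1)
          have hv := congrArg Fin.val e4
          simp only [Fin.val_mk] at hv
          omega
        rw [hgiv] at e2
        apply Fin.ext
        omega
    · intro i j hi hj hrel
      have h2 := (iff1 (Sum.inr i) (Sum.inr j)).mp hrel
      simp only [Sum.map_inl, Sum.map_inr] at h2
      rw [hjp] at h2
      have hgiv := gval i hi
      have hgjv := gval j hj
      rcases h2 with h | ⟨h1, h2⟩ | ⟨h1, h2⟩
      · have := g2 _ _ (by omega) (by omega) h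
        have hv := congrArg Fin.val this
        rw [hgiv, hgjv] at hv
        exact Fin.ext hv
      · have e1 := g2 ⟨r / 2, hs'⟩ _ (by simp only [Fin.val_mk]; exact le_rfl) (by omega) h2
        have hvj := congrArg Fin.val e1
        rw [hgjv] at hvj
        simp only [Fin.val_mk] at hvj
        have e2 : (gF n (r / 2) hs i : ℕ) = r / 2 := by
          by_contra hne
          have hilt : (gF n (r / 2) hs i : ℕ) < r / 2 := by omega
          have e3 := g3 _ hilt
          have e4 := g1 (gF n (r / 2) hs i) ⟨r / 2, hs'⟩ (le_of_lt hilt)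
            (by simp only [Fin.val_mk]; exact le_rfl)
            ((Hgen _ _ _).iseqv.trans e3 h1)
          have hv := congrArg Fin.val e4
          simp only [Fin.val_mk] at hv
          omega
        rw [hgiv] at e2
        apply Fin.ext
        omega
      · have e1 := g2 _ ⟨r / 2, hs'⟩ (by omega) (by simp only [Fin.val_mk]; exact le_rfl) h1
        have hvi := congrArg Fin.val e1
        rw [hgiv] at hvi
        simp only [Fin.val_mk] at hvi
        have e2 : (gF n (r / 2) hs j : ℕ) = r / 2 := by
          by_contra hne
          have hjlt : (gF n (r / 2) hs j : ℕ) < r / 2 := by omega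
          have e3 := g3 _ hjlt
          have e4 := g1 ⟨r / 2, hs'⟩ (gF n (r / 2) hs j) (by simp only [Fin.val_mk]; exact le_rfl)
            (le_of_lt hjlt)
            ((Hgen _ _ _).iseqv.trans h2 ((Hgen _ _ _).iseqv.symm e3))
          have hv := congrArg Fin.val e4
          simp only [Fin.val_mk] at hv
          omega
        rw [hgjv] at e2
        apply Fin.ext
        omega
    · intro i hi
      have hib : (i : ℕ) < n - 1 := by omega
      have h3 := g3 ⟨(i : ℕ), hib⟩ (by simp only [Fin.val_mk]; exact hi)
      have h4 : (Hgen (r / 2) (delPt (r / 2 + 1) p) (delPt (r / 2 + 1) q)).r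
          (Sum.inl ⟨(i : ℕ), hib⟩) (Sum.inr ⟨(i : ℕ), hib⟩) := hgen_mono (Nat.le_succ _) h3
      have h5 := (iff2 (Sum.inl ⟨(i : ℕ), hib⟩) (Sum.inr ⟨(i : ℕ), hib⟩)).mp h4
      have hei : embF n (r / 2 + 1) ⟨(i : ℕ), hib⟩ = i := by
        apply Fin.ext
        rw [eval ⟨(i : ℕ), hib⟩ (by simp only [Fin.val_mk]; omega)]
      rw [show Sum.map (embF n (r / 2 + 1)) (embF n (r / 2 + 1))
            (Sum.inl (⟨(i : ℕ), hib⟩ : Fin (n - 1))) = Sum.inl i from by rw [Sum.map_inl, hei],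
          show Sum.map (embF n (r / 2 + 1)) (embF n (r / 2 + 1))
            (Sum.inr (⟨(i : ℕ), hib⟩ : Fin (n - 1))) = Sum.inr i from by rw [Sum.map_inr, hei]]
        at h5
      exact h5
    · intro _ i hival
      have hieq : i = ⟨r / 2, hsn⟩ := Fin.ext hival
      rw [hieq]
      exact hsmid

end BAodd
namespace BAodd

variable {n r : ℕ}

lemma eEnt_eq (N : ℕ) (hodd : r % 2 = 1) (hrn : r < n - 1) (p q : Setoid (Fin n))
    (hp : p ∈ Yset n r) (hq : q ∈ Yset n r) :
    eEnt N r p q = eEnt N (r - 1) (delPt (r / 2 + 1) p) (delPt (r / 2 + 1) q) := by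
  unfold eEnt
  rw [rl_eq hodd hrn p q (part_a hodd hrn p hp) (part_a hodd hrn q hq)]
  exact if_congr (flaw_iff hodd hrn p q hp hq) rfl rfl

end BAodd

/-- Odd case `0 < r = 2s+1 < n-1`: (a) for every `p ∈ Y(n,r)` the points `s+1` and `s+2`
(1-indexed, i.e. indices `s` and `s+1`) lie in the same block; (b) deleting the point
`s+2` is a bijection from `Y(n,r)` onto `W(n-1,r-1)`; (c) the entries match:
`e_r(p,q) = e_{r-1}(α(p), α(q))`. Consequently `B(n,r)` equals `A(n-1,r-1)` up to a
simultaneous permutation of rows and columns. -/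
theorem B_eq_A_odd (N : ℕ) (hN : 1 ≤ N) (n r : ℕ) (hr0 : 0 < r) (hodd : r % 2 = 1)
    (hrn : r < n - 1) :
    (∀ p ∈ Yset n r, p.r ⟨r / 2, by omega⟩ ⟨r / 2 + 1, by omega⟩) ∧
    Set.BijOn (delPt (r / 2 + 1)) (Yset n r) (Wset (n - 1) (r - 1)) ∧
    (∀ p ∈ Yset n r, ∀ q ∈ Yset n r,
      eEnt N r p q = eEnt N (r - 1) (delPt (r / 2 + 1) p) (delPt (r / 2 + 1) q)) ∧
    (∃ σ : ↥(Yset n r) ≃ ↥(Wset (n - 1) (r - 1)),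
      ∀ p q : ↥(Yset n r), eEnt N r p.1 q.1 = eEnt N (r - 1) (σ p).1 (σ q).1) := by
  refine ⟨fun p hp => BAodd.part_a hodd hrn p hp, BAodd.bijOn hodd hrn,
    fun p hp q hq => BAodd.eEnt_eq N hodd hrn p q hp hq,
    ⟨(BAodd.bijOn hodd hrn).equiv _, fun p q => ?_⟩⟩
  exact BAodd.eEnt_eq N hodd hrn p.1 q.1 p.2 q.2
end

section
/- Let N ≥ 1 and let 0 < r = 2s < n−1 with r even. Then: (a) for every p ∈ Y(n,r) the point s+1 is a singleton of p; (b) the map α sending p ∈ Y(n,r) to the partition of Fin(n−1) obtained by deleting the point s+1 from p (and relabelling the points s+2,…,n as s+1,…,n−1 via the order-preserving bijection) is a bijection from Y(n,r) onto W(n−1, r−1); and (c) for all p, q ∈ Y(n,r) one has e_r(p,q) = N · e_{r−1}(α(p), α(q)). Consequently B(n,r) equals N · A(n−1, r−1) up to a simultaneous permutation of rows and columns. -/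
attribute [local instance] Classical.propDecidable

section AuxNC
open Sum

variable {n : ℕ}

/-! ### The embedding and retraction -/

def fEmb (n s : ℕ) (i : Fin (n - 1)) : Fin n :=
  if (i : ℕ) < s then ⟨(i : ℕ), by have := i.isLt; omega⟩
  else ⟨(i : ℕ) + 1, by have := i.isLt; omega⟩

lemma delPt_eq (s : ℕ) (p : Setoid (Fin n)) : delPt s p = Setoid.comap (fEmb n s) p := rfl

lemma delPt_rel (s : ℕ) (p : Setoid (Fin n)) (x y : Fin (n-1)) :
    (delPt s p).r x y ↔ p.r (fEmb n s x) (fEmb n s y) := Iff.rfl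

lemma fEmb_val (s : ℕ) (i : Fin (n-1)) :
    ((fEmb n s i : Fin n) : ℕ) = if (i : ℕ) < s then (i : ℕ) else (i : ℕ) + 1 := by
  unfold fEmb; split_ifs <;> rfl

lemma fEmb_ne (s : ℕ) (i : Fin (n-1)) : ((fEmb n s i : Fin n) : ℕ) ≠ s := by
  rw [fEmb_val]; split_ifs <;> omega

lemma fEmb_inj (s : ℕ) : Function.Injective (fEmb n s) := by
  intro a b h
  have h' := congrArg Fin.val h
  rw [fEmb_val, fEmb_val] at h'
  apply Fin.ext
  split_ifs at h' <;> omega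

lemma fEmb_mono (s : ℕ) : StrictMono (fEmb n s) := by
  intro a b h
  rw [Fin.lt_def] at h ⊢
  rw [fEmb_val, fEmb_val]
  split_ifs <;> omega

def gRet (n s : ℕ) (hn : s + 1 < n) (a : Fin n) : Fin (n - 1) :=
  if h : (a : ℕ) < s then ⟨(a : ℕ), by omega⟩
  else ⟨(a : ℕ) - 1, by have := a.isLt; omega⟩

lemma gRet_val (hn : s + 1 < n) (a : Fin n) :
    ((gRet n s hn a : Fin (n-1)) : ℕ) = if (a : ℕ) < s then (a : ℕ) else (a : ℕ) - 1 := by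
  unfold gRet; split_ifs <;> rfl

lemma fEmb_gRet {s : ℕ} (hn : s + 1 < n) {a : Fin n} (h : (a : ℕ) ≠ s) :
    fEmb n s (gRet n s hn a) = a := by
  apply Fin.ext
  rw [fEmb_val, gRet_val]
  split_ifs <;> omega

lemma gRet_fEmb {s : ℕ} (hn : s + 1 < n) (i : Fin (n-1)) :
    gRet n s hn (fEmb n s i) = i := by
  apply Fin.ext
  rw [gRet_val, fEmb_val]
  have := i.isLt
  split_ifs <;> omega

/-! ### Generator lemmas for `Gjoin` and `Hrel` -/

variable {p q : Setoid (Fin n)}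

lemma Gjoin_of_left {a b : Fin n} (h : p.r a b) : (Gjoin p q).r (inl a) (inl b) :=
  fun t ht => ht.1 a b h

lemma Gjoin_of_right {a b : Fin n} (h : q.r a b) : (Gjoin p q).r (inr a) (inr b) :=
  fun t ht => ht.2.1 a b h

lemma Gjoin_mix (i : Fin n) : (Gjoin p q).r (inl i) (inr i) :=
  fun t ht => ht.2.2 i

lemma Gjoin_le {T : Setoid (Fin n ⊕ Fin n)}
    (h1 : ∀ a b, p.r a b → T.r (inl a) (inl b))
    (h2 : ∀ a b, q.r a b → T.r (inr a) (inr b))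
    (h3 : ∀ i, T.r (inl i) (inr i)) {x y} (h : (Gjoin p q).r x y) : T.r x y :=
  h T ⟨h1, h2, h3⟩

lemma Hrel_of_left {r : ℕ} {a b : Fin n} (h : p.r a b) : (Hrel r p q).r (inl a) (inl b) :=
  fun t ht => ht.1 a b h

lemma Hrel_of_right {r : ℕ} {a b : Fin n} (h : q.r a b) : (Hrel r p q).r (inr a) (inr b) :=
  fun t ht => ht.2.1 a b h

lemma Hrel_mix {r : ℕ} {i : Fin n} (hi : r / 2 + 1 ≤ (i : ℕ)) :
    (Hrel r p q).r (inl i) (inr i) :=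
  fun t ht => ht.2.2 i hi

lemma Hrel_le {r : ℕ} {T : Setoid (Fin n ⊕ Fin n)}
    (h1 : ∀ a b, p.r a b → T.r (inl a) (inl b))
    (h2 : ∀ a b, q.r a b → T.r (inr a) (inr b))
    (h3 : ∀ i : Fin n, r / 2 + 1 ≤ (i : ℕ) → T.r (inl i) (inr i))
    {x y} (h : (Hrel r p q).r x y) : T.r x y :=
  h T ⟨h1, h2, h3⟩

/-! ### Extension of a setoid along an injection, adding singleton classes -/

def extSetoid {α β : Type*} (F : α → β) (hF : Function.Injective F) (T : Setoid α) :
    Setoid β where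
  r u v := u = v ∨ ∃ x y, u = F x ∧ v = F y ∧ T.r x y
  iseqv := by
    refine ⟨fun u => Or.inl rfl, ?_, ?_⟩
    · rintro u v (rfl | ⟨x, y, rfl, rfl, h⟩)
      · exact Or.inl rfl
      · exact Or.inr ⟨y, x, rfl, rfl, T.iseqv.symm h⟩
    · rintro u v w (rfl | ⟨x, y, rfl, rfl, h⟩) h2
      · exact h2
      · rcases h2 with h2 | ⟨y', z, he, rfl, h'⟩
        · exact h2 ▸ Or.inr ⟨x, y, rfl, rfl, h⟩
        · cases hF he
          exact Or.inr ⟨x, z, rfl, rfl, T.iseqv.trans h h'⟩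

/-! ### Transfer lemmas -/

section Transfer

variable {s : ℕ}

lemma hrel_structure {r r' : ℕ} (hs : 1 ≤ s) (hn : 2 * s + 1 < n)
    (hp : IsSingletonPt p ⟨s, by omega⟩) (hq : IsSingletonPt q ⟨s, by omega⟩)
    (hr : r / 2 = s) (hr' : r' / 2 = s - 1) {x y : Fin n ⊕ Fin n}
    (h : (Hrel r p q).r x y) :
    x = y ∨ ∃ x' y', x = Sum.map (fEmb n s) (fEmb n s) x' ∧
      y = Sum.map (fEmb n s) (fEmb n s) y' ∧
      (Hrel r' (delPt s p) (delPt s q)).r x' y' := by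
  have hn' : s + 1 < n := by omega
  have hsn : s < n := by omega
  have hFinj : Function.Injective (Sum.map (fEmb n s) (fEmb n s)) :=
    Function.Injective.sumMap (fEmb_inj s) (fEmb_inj s)
  refine Hrel_le (T := extSetoid _ hFinj (Hrel r' (delPt s p) (delPt s q))) ?_ ?_ ?_ h
  · intro a b hab
    by_cases ha : (a : ℕ) = s
    · have ha' : a = ⟨s, hsn⟩ := Fin.ext ha
      subst ha'
      have : b = ⟨s, hsn⟩ := hp b hab
      exact Or.inl (by rw [this])
    · by_cases hb : (b : ℕ) = s
      · exfalso
        have hb' : b = ⟨s, hsn⟩ := Fin.ext hb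
        subst hb'
        exact ha (congrArg Fin.val (hp a (p.iseqv.symm hab)))
      · refine Or.inr ⟨Sum.inl (gRet n s hn' a), Sum.inl (gRet n s hn' b), ?_, ?_, ?_⟩
        · simp [fEmb_gRet hn' ha]
        · simp [fEmb_gRet hn' hb]
        · refine Hrel_of_left ?_
          show p.r (fEmb n s (gRet n s hn' a)) (fEmb n s (gRet n s hn' b))
          rw [fEmb_gRet hn' ha, fEmb_gRet hn' hb]; exact hab
  · intro a b hab
    by_cases ha : (a : ℕ) = s
    · have ha' : a = ⟨s, hsn⟩ := Fin.ext ha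
      subst ha'
      have : b = ⟨s, hsn⟩ := hq b hab
      exact Or.inl (by rw [this])
    · by_cases hb : (b : ℕ) = s
      · exfalso
        have hb' : b = ⟨s, hsn⟩ := Fin.ext hb
        subst hb'
        exact ha (congrArg Fin.val (hq a (q.iseqv.symm hab)))
      · refine Or.inr ⟨Sum.inr (gRet n s hn' a), Sum.inr (gRet n s hn' b), ?_, ?_, ?_⟩
        · simp [fEmb_gRet hn' ha]
        · simp [fEmb_gRet hn' hb]
        · refine Hrel_of_right ?_
          show q.r (fEmb n s (gRet n s hn' a)) (fEmb n s (gRet n s hn' b))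
          rw [fEmb_gRet hn' ha, fEmb_gRet hn' hb]; exact hab
  · intro i hi
    rw [hr] at hi
    have hine : (i : ℕ) ≠ s := by omega
    refine Or.inr ⟨Sum.inl (gRet n s hn' i), Sum.inr (gRet n s hn' i), ?_, ?_, ?_⟩
    · simp [fEmb_gRet hn' hine]
    · simp [fEmb_gRet hn' hine]
    · refine Hrel_mix ?_
      rw [hr', gRet_val]
      split_ifs <;> omega

lemma hrel_iff {r r' : ℕ} (hs : 1 ≤ s) (hn : 2 * s + 1 < n)
    (hp : IsSingletonPt p ⟨s, by omega⟩) (hq : IsSingletonPt q ⟨s, by omega⟩)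
    (hr : r / 2 = s) (hr' : r' / 2 = s - 1) (x y : Fin (n-1) ⊕ Fin (n-1)) :
    (Hrel r' (delPt s p) (delPt s q)).r x y ↔
      (Hrel r p q).r (Sum.map (fEmb n s) (fEmb n s) x) (Sum.map (fEmb n s) (fEmb n s) y) := by
  have hFinj : Function.Injective (Sum.map (fEmb n s) (fEmb n s)) :=
    Function.Injective.sumMap (fEmb_inj s) (fEmb_inj s)
  constructor
  · intro h
    refine Hrel_le (T := Setoid.comap (Sum.map (fEmb n s) (fEmb n s)) (Hrel r p q))
      ?_ ?_ ?_ h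
    · intro a b hab
      exact Hrel_of_left hab
    · intro a b hab
      exact Hrel_of_right hab
    · intro i hi
      show (Hrel r p q).r (inl (fEmb n s i)) (inr (fEmb n s i))
      refine Hrel_mix ?_
      rw [hr]
      rw [hr'] at hi
      rw [fEmb_val]
      split_ifs <;> omega
  · intro h
    rcases hrel_structure hs hn hp hq hr hr' h with heq | ⟨x', y', hx, hy, h'⟩
    · cases hFinj heq
      exact (Hrel r' (delPt s p) (delPt s q)).iseqv.refl x
    · cases hFinj hx
      cases hFinj hy
      exact h'

lemma hrel_sing_inl {r r' : ℕ} (hs : 1 ≤ s) (hn : 2 * s + 1 < n)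
    (hp : IsSingletonPt p ⟨s, by omega⟩) (hq : IsSingletonPt q ⟨s, by omega⟩)
    (hr : r / 2 = s) (hr' : r' / 2 = s - 1) {v : Fin n ⊕ Fin n}
    (h : (Hrel r p q).r (Sum.inl ⟨s, by omega⟩) v) : v = Sum.inl ⟨s, by omega⟩ := by
  rcases hrel_structure hs hn hp hq hr hr' h with heq | ⟨x', y', hx, hy, _⟩
  · exact heq.symm
  · exfalso
    cases x' with
    | inl a =>
      simp only [Sum.map_inl, Sum.inl.injEq] at hx
      exact fEmb_ne s a (congrArg Fin.val hx).symm
    | inr a => simp at hx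

lemma hrel_sing_inr {r r' : ℕ} (hs : 1 ≤ s) (hn : 2 * s + 1 < n)
    (hp : IsSingletonPt p ⟨s, by omega⟩) (hq : IsSingletonPt q ⟨s, by omega⟩)
    (hr : r / 2 = s) (hr' : r' / 2 = s - 1) {v : Fin n ⊕ Fin n}
    (h : (Hrel r p q).r (Sum.inr ⟨s, by omega⟩) v) : v = Sum.inr ⟨s, by omega⟩ := by
  rcases hrel_structure hs hn hp hq hr hr' h with heq | ⟨x', y', hx, hy, _⟩
  · exact heq.symm
  · exfalso
    cases x' with
    | inr a =>
      simp only [Sum.map_inr, Sum.inr.injEq] at hx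
      exact fEmb_ne s a (congrArg Fin.val hx).symm
    | inl a => simp at hx

/-! ### `rl` under deletion of a common singleton -/

lemma gjoin_map {x y : Fin (n-1) ⊕ Fin (n-1)}
    (hn' : s + 1 < n)
    (h : (Gjoin (delPt s p) (delPt s q)).r x y) :
    (Gjoin p q).r (Sum.map (fEmb n s) (fEmb n s) x) (Sum.map (fEmb n s) (fEmb n s) y) := by
  refine Gjoin_le (T := Setoid.comap (Sum.map (fEmb n s) (fEmb n s)) (Gjoin p q))
    ?_ ?_ ?_ h
  · intro a b hab; exact Gjoin_of_left hab
  · intro a b hab; exact Gjoin_of_right hab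
  · intro i; exact Gjoin_mix (fEmb n s i)

lemma rl_delPt (hs : 1 ≤ s) (hn : 2 * s + 1 < n)
    (hp : IsSingletonPt p ⟨s, by omega⟩) (hq : IsSingletonPt q ⟨s, by omega⟩) :
    rl p q = rl (delPt s p) (delPt s q) + 1 := by
  have hn' : s + 1 < n := by omega
  have hsn : s < n := by omega
  set G' := Gjoin (delPt s p) (delPt s q) with hG'
  -- the classifying map
  set k : Fin n ⊕ Fin n → Option (Quotient G') := fun u =>
    match u with
    | Sum.inl a => if (a : ℕ) = s then none else some ⟦Sum.inl (gRet n s hn' a)⟧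
    | Sum.inr a => if (a : ℕ) = s then none else some ⟦Sum.inr (gRet n s hn' a)⟧
    with hk
  have hker : ∀ x y, (Gjoin p q).r x y → k x = k y := by
    intro x y h
    refine Gjoin_le (T := Setoid.ker k) ?_ ?_ ?_ h
    · intro a b hab
      show k (Sum.inl a) = k (Sum.inl b)
      by_cases ha : (a : ℕ) = s
      · have ha' : a = ⟨s, hsn⟩ := Fin.ext ha
        subst ha'
        have hb := hp b hab
        simp [hk, hb]
      · have hbne : (b : ℕ) ≠ s := by
          intro hb
          have hb' : b = ⟨s, hsn⟩ := Fin.ext hb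
          subst hb'
          exact ha (congrArg Fin.val (hp a (p.iseqv.symm hab)))
        simp only [hk, if_neg ha, if_neg hbne, Option.some.injEq]
        refine Quotient.sound (Gjoin_of_left ?_)
        show p.r (fEmb n s (gRet n s hn' a)) (fEmb n s (gRet n s hn' b))
        rw [fEmb_gRet hn' ha, fEmb_gRet hn' hbne]; exact hab
    · intro a b hab
      show k (Sum.inr a) = k (Sum.inr b)
      by_cases ha : (a : ℕ) = s
      · have ha' : a = ⟨s, hsn⟩ := Fin.ext ha
        subst ha'
        have hb := hq b hab
        simp [hk, hb]
      · have hbne : (b : ℕ) ≠ s := by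
          intro hb
          have hb' : b = ⟨s, hsn⟩ := Fin.ext hb
          subst hb'
          exact ha (congrArg Fin.val (hq a (q.iseqv.symm hab)))
        simp only [hk, if_neg ha, if_neg hbne, Option.some.injEq]
        refine Quotient.sound (Gjoin_of_right ?_)
        show q.r (fEmb n s (gRet n s hn' a)) (fEmb n s (gRet n s hn' b))
        rw [fEmb_gRet hn' ha, fEmb_gRet hn' hbne]; exact hab
    · intro i
      show k (Sum.inl i) = k (Sum.inr i)
      by_cases hi : (i : ℕ) = s
      · simp [hk, hi]
      · simp only [hk, if_neg hi, Option.some.injEq]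
        exact Quotient.sound (Gjoin_mix _)
  have hwd : ∀ x y, G'.r x y →
      (⟦Sum.map (fEmb n s) (fEmb n s) x⟧ : Quotient (Gjoin p q)) =
      ⟦Sum.map (fEmb n s) (fEmb n s) y⟧ :=
    fun x y h => Quotient.sound (gjoin_map hn' h)
  have e : Quotient (Gjoin p q) ≃ Option (Quotient G') :=
    { toFun := Quotient.lift k hker
      invFun := fun o =>
        match o with
        | none => ⟦Sum.inl ⟨s, hsn⟩⟧
        | some c => Quotient.lift (fun x => (⟦Sum.map (fEmb n s) (fEmb n s) x⟧ :
            Quotient (Gjoin p q))) hwd c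
      left_inv := by
        intro c
        induction c using Quotient.inductionOn with
        | h u =>
          cases u with
          | inl a =>
            by_cases ha : (a : ℕ) = s
            · have ha' : a = ⟨s, hsn⟩ := Fin.ext ha
              subst ha'
              simp [hk]
            · simp only [Quotient.lift_mk, hk, if_neg ha, Quotient.lift_mk, Sum.map_inl]
              rw [fEmb_gRet hn' ha]
          | inr a =>
            by_cases ha : (a : ℕ) = s
            · have ha' : a = ⟨s, hsn⟩ := Fin.ext ha
              subst ha'
              simp only [Quotient.lift_mk, hk, if_pos]
              exact Quotient.sound (Gjoin_mix _)
            · simp only [Quotient.lift_mk, hk, if_neg ha, Quotient.lift_mk, Sum.map_inr]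
              rw [fEmb_gRet hn' ha]
      right_inv := by
        intro o
        cases o with
        | none => simp [hk]
        | some c =>
          induction c using Quotient.inductionOn with
          | h x =>
            cases x with
            | inl a =>
              simp only [Quotient.lift_mk, Sum.map_inl, hk, if_neg (fEmb_ne s a),
                Option.some.injEq]
              rw [gRet_fEmb hn' a]
            | inr a =>
              simp only [Quotient.lift_mk, Sum.map_inr, hk, if_neg (fEmb_ne s a),
                Option.some.injEq]
              rw [gRet_fEmb hn' a] }
  rw [rl, rl, Nat.card_congr e, Finite.card_option]

end Transfer

section Flawless

variable {s : ℕ}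

lemma rflawless_iff (hs : 1 ≤ s) (hn : 2 * s + 1 < n)
    (hp : IsSingletonPt p ⟨s, by omega⟩) (hq : IsSingletonPt q ⟨s, by omega⟩)
    {r : ℕ} (hr : r = 2 * s) :
    RFlawless r p q ↔ RFlawless (r - 1) (delPt s p) (delPt s q) := by
  have hsn : s < n := by omega
  have hr2 : r / 2 = s := by omega
  have hr2' : (r - 1) / 2 = s - 1 := by omega
  have hrm : r % 2 = 0 := by omega
  have hrm' : (r - 1) % 2 = 1 := by omega
  have tr := hrel_iff (p := p) (q := q) hs hn hp hq hr2 hr2'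
  constructor
  · rintro ⟨A, B, C, -⟩
    refine ⟨?_, ?_, ?_, ?_⟩
    · intro i j hi hj hrel
      rw [hr2'] at hi hj
      rw [tr (Sum.inl i) (Sum.inl j)] at hrel
      simp only [Sum.map_inl] at hrel
      exact fEmb_inj s (A _ _ (by rw [hr2, fEmb_val]; split_ifs <;> omega)
        (by rw [hr2, fEmb_val]; split_ifs <;> omega) hrel)
    · intro i j hi hj hrel
      rw [hr2'] at hi hj
      rw [tr (Sum.inr i) (Sum.inr j)] at hrel
      simp only [Sum.map_inr] at hrel
      exact fEmb_inj s (B _ _ (by rw [hr2, fEmb_val]; split_ifs <;> omega)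
        (by rw [hr2, fEmb_val]; split_ifs <;> omega) hrel)
    · intro i hi
      rw [hr2'] at hi
      rw [tr (Sum.inl i) (Sum.inr i)]
      simp only [Sum.map_inl, Sum.map_inr]
      exact C _ (by rw [hr2, fEmb_val]; split_ifs <;> omega)
    · intro _ i hi
      rw [hr2'] at hi
      rw [tr (Sum.inl i) (Sum.inr i)]
      simp only [Sum.map_inl, Sum.map_inr]
      exact C _ (by rw [hr2, fEmb_val]; split_ifs <;> omega)
  · rintro ⟨A, B, C, D⟩
    refine ⟨?_, ?_, ?_, ?_⟩
    · intro i j hi hj hrel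
      rw [hr2] at hi hj
      by_cases his : (i : ℕ) = s
      · have hi' : i = ⟨s, hsn⟩ := Fin.ext his
        subst hi'
        exact (Sum.inl.inj (hrel_sing_inl hs hn hp hq hr2 hr2' hrel)).symm
      · by_cases hjs : (j : ℕ) = s
        · have hj' : j = ⟨s, hsn⟩ := Fin.ext hjs
          subst hj'
          exact Sum.inl.inj
            (hrel_sing_inl hs hn hp hq hr2 hr2' ((Hrel r p q).iseqv.symm hrel))
        · have hi2 : (i : ℕ) < s := by omega
          have hj2 : (j : ℕ) < s := by omega
          have hin : (i : ℕ) < n - 1 := by omega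
          have hjn : (j : ℕ) < n - 1 := by omega
          have hfi : fEmb n s ⟨(i : ℕ), hin⟩ = i := by
            apply Fin.ext; rw [fEmb_val]
            show (if (i : ℕ) < s then (i : ℕ) else (i : ℕ) + 1) = (i : ℕ)
            rw [if_pos hi2]
          have hfj : fEmb n s ⟨(j : ℕ), hjn⟩ = j := by
            apply Fin.ext; rw [fEmb_val]
            show (if (j : ℕ) < s then (j : ℕ) else (j : ℕ) + 1) = (j : ℕ)
            rw [if_pos hj2]
          have hkey : (Hrel (r-1) (delPt s p) (delPt s q)).r
              (Sum.inl ⟨(i : ℕ), hin⟩) (Sum.inl ⟨(j : ℕ), hjn⟩) := by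
            rw [tr]
            simp only [Sum.map_inl]
            rw [hfi, hfj]; exact hrel
          have := A _ _ (by show (i : ℕ) ≤ (r-1)/2; omega)
            (by show (j : ℕ) ≤ (r-1)/2; omega) hkey
          have hv := congrArg Fin.val this
          exact Fin.ext hv
    · intro i j hi hj hrel
      rw [hr2] at hi hj
      by_cases his : (i : ℕ) = s
      · have hi' : i = ⟨s, hsn⟩ := Fin.ext his
        subst hi'
        exact (Sum.inr.inj (hrel_sing_inr hs hn hp hq hr2 hr2' hrel)).symm
      · by_cases hjs : (j : ℕ) = s
        · have hj' : j = ⟨s, hsn⟩ := Fin.ext hjs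
          subst hj'
          exact Sum.inr.inj
            (hrel_sing_inr hs hn hp hq hr2 hr2' ((Hrel r p q).iseqv.symm hrel))
        · have hi2 : (i : ℕ) < s := by omega
          have hj2 : (j : ℕ) < s := by omega
          have hin : (i : ℕ) < n - 1 := by omega
          have hjn : (j : ℕ) < n - 1 := by omega
          have hfi : fEmb n s ⟨(i : ℕ), hin⟩ = i := by
            apply Fin.ext; rw [fEmb_val]
            show (if (i : ℕ) < s then (i : ℕ) else (i : ℕ) + 1) = (i : ℕ)
            rw [if_pos hi2]
          have hfj : fEmb n s ⟨(j : ℕ), hjn⟩ = j := by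
            apply Fin.ext; rw [fEmb_val]
            show (if (j : ℕ) < s then (j : ℕ) else (j : ℕ) + 1) = (j : ℕ)
            rw [if_pos hj2]
          have hkey : (Hrel (r-1) (delPt s p) (delPt s q)).r
              (Sum.inr ⟨(i : ℕ), hin⟩) (Sum.inr ⟨(j : ℕ), hjn⟩) := by
            rw [tr]
            simp only [Sum.map_inr]
            rw [hfi, hfj]; exact hrel
          have := B _ _ (by show (i : ℕ) ≤ (r-1)/2; omega)
            (by show (j : ℕ) ≤ (r-1)/2; omega) hkey
          have hv := congrArg Fin.val this
          exact Fin.ext hv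
    · intro i hi
      rw [hr2] at hi
      have hin : (i : ℕ) < n - 1 := by omega
      have hfi : fEmb n s ⟨(i : ℕ), hin⟩ = i := by
        apply Fin.ext; rw [fEmb_val]
        show (if (i : ℕ) < s then (i : ℕ) else (i : ℕ) + 1) = (i : ℕ)
        rw [if_pos hi]
      have key : (Hrel (r-1) (delPt s p) (delPt s q)).r
          (Sum.inl ⟨(i : ℕ), hin⟩) (Sum.inr ⟨(i : ℕ), hin⟩) := by
        by_cases hcase : (i : ℕ) < s - 1
        · exact C _ (by show (i : ℕ) < (r-1)/2; omega)
        · exact D hrm' _ (by show (i : ℕ) = (r-1)/2; omega)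
      rw [tr] at key
      simp only [Sum.map_inl, Sum.map_inr] at key
      rwa [hfi] at key
    · intro hcon
      exact absurd hcon (by omega)

end Flawless

lemma eEnt_delPt {s : ℕ} (N : ℕ) (hs : 1 ≤ s) (hn : 2 * s + 1 < n)
    (hp : IsSingletonPt p ⟨s, by omega⟩) (hq : IsSingletonPt q ⟨s, by omega⟩)
    {r : ℕ} (hr : r = 2 * s) :
    eEnt N r p q = (N : ℝ) * eEnt N (r - 1) (delPt s p) (delPt s q) := by
  rw [eEnt, eEnt]
  by_cases h : RFlawless (r - 1) (delPt s p) (delPt s q)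
  · rw [if_pos h, if_pos ((rflawless_iff hs hn hp hq hr).mpr h)]
    rw [rl_delPt hs hn hp hq, pow_succ]
    ring
  · rw [if_neg fun hc => h ((rflawless_iff hs hn hp hq hr).mp hc), if_neg h]
    ring


end AuxNC

section Comb

variable {s : ℕ}

lemma gRet_lt_gRet (hn' : s + 1 < n) {a b : Fin n} (h : a < b)
    (ha : (a : ℕ) ≠ s) (hb : (b : ℕ) ≠ s) : gRet n s hn' a < gRet n s hn' b := by
  rw [Fin.lt_def] at h ⊢
  rw [gRet_val, gRet_val]
  split_ifs <;> omega

/-- Part (a): every element of `Y(n,r)` (even `r = 2s`) has the point `s+1` as singleton. -/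
lemma sing_of_mem_Y {r : ℕ} (hr : r = 2 * s) (hs : 1 ≤ s) (hn : 2 * s + 1 < n)
    {p : Setoid (Fin n)} (hp : p ∈ Yset n r) : IsSingletonPt p ⟨s, by omega⟩ := by
  obtain ⟨hpW, hpnot⟩ := hp
  obtain ⟨hc, hsing, hdist⟩ := hpW
  have key : ∃ i : Fin n, (i : ℕ) ≤ s ∧ IsSingletonPt p i := by
    by_contra hcon
    push_neg at hcon
    apply hpnot
    refine ⟨hc, ?_, ?_⟩
    · intro i hi
      rw [if_neg (by omega : ¬((r + 1) % 2 = 0))] at hi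
      exact hcon i (by omega)
    · intro i j hi hj hrel
      exact hdist i j (by omega) (by omega) hrel
  obtain ⟨i, hi, hising⟩ := key
  have his : (i : ℕ) = s := by
    by_contra hne
    exact hsing i (by rw [if_pos (by omega : r % 2 = 0)]; omega) hising
  have : i = ⟨s, by omega⟩ := Fin.ext his
  exact this ▸ hising

/-- Part (b), mapsTo: deleting the singleton lands in `W(n-1, r-1)`. -/
lemma delPt_mem_W {r : ℕ} (hr : r = 2 * s) (hs : 1 ≤ s) (hn : 2 * s + 1 < n)
    {p : Setoid (Fin n)} (hp : p ∈ Yset n r) : delPt s p ∈ Wset (n - 1) (r - 1) := by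
  have hn' : s + 1 < n := by omega
  have hsn : s < n := by omega
  have hsp : IsSingletonPt p ⟨s, by omega⟩ := sing_of_mem_Y hr hs hn hp
  obtain ⟨⟨hc, hsing, hdist⟩, -⟩ := hp
  refine ⟨?_, ?_, ?_⟩
  · rintro ⟨a, b, c, d, hab, hbc, hcd, hac, hbd, hnab⟩
    exact hc ⟨fEmb n s a, fEmb n s b, fEmb n s c, fEmb n s d,
      fEmb_mono s hab, fEmb_mono s hbc, fEmb_mono s hcd, hac, hbd, hnab⟩
  · intro i hi hising
    rw [if_neg (by omega : ¬((r - 1) % 2 = 0))] at hi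
    have hilt : (i : ℕ) < s := by omega
    have hival : ((fEmb n s i : Fin n) : ℕ) = (i : ℕ) := by
      rw [fEmb_val, if_pos hilt]
    refine hsing (fEmb n s i) (by rw [if_pos (by omega : r % 2 = 0)]; omega) ?_
    intro j hj
    have hjne : (j : ℕ) ≠ s := by
      intro hjs
      have hj' : j = ⟨s, hsn⟩ := Fin.ext hjs
      subst hj'
      have := hsp (fEmb n s i) (p.iseqv.symm hj)
      exact absurd (congrArg Fin.val this) (by rw [hival]; omega)
    have hrel : (delPt s p).r i (gRet n s hn' j) := by
      show p.r (fEmb n s i) (fEmb n s (gRet n s hn' j))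
      rw [fEmb_gRet hn' hjne]
      exact hj
    have := hising _ hrel
    calc j = fEmb n s (gRet n s hn' j) := (fEmb_gRet hn' hjne).symm
    _ = fEmb n s i := by rw [this]
  · intro i j hi hj hrel
    refine fEmb_inj s (hdist (fEmb n s i) (fEmb n s j) ?_ ?_ hrel)
    · rw [fEmb_val]; split_ifs <;> omega
    · rw [fEmb_val]; split_ifs <;> omega

/-- Inserting a singleton point at index `s`. -/
def insSing (n s : ℕ) (hn' : s + 1 < n) (q : Setoid (Fin (n - 1))) : Setoid (Fin n) where
  r a b := a = b ∨ ((a : ℕ) ≠ s ∧ (b : ℕ) ≠ s ∧ q.r (gRet n s hn' a) (gRet n s hn' b))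
  iseqv := by
    refine ⟨fun a => Or.inl rfl, ?_, ?_⟩
    · rintro a b (rfl | ⟨h1, h2, h⟩)
      · exact Or.inl rfl
      · exact Or.inr ⟨h2, h1, q.iseqv.symm h⟩
    · rintro a b c (rfl | ⟨h1, h2, h⟩) h'
      · exact h'
      · rcases h' with rfl | ⟨h2', h3, h'⟩
        · exact Or.inr ⟨h1, h2, h⟩
        · exact Or.inr ⟨h1, h3, q.iseqv.trans h h'⟩

lemma insSing_rel (hn' : s + 1 < n) (q : Setoid (Fin (n - 1))) (a b : Fin n) :
    (insSing n s hn' q).r a b ↔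
      (a = b ∨ ((a : ℕ) ≠ s ∧ (b : ℕ) ≠ s ∧ q.r (gRet n s hn' a) (gRet n s hn' b))) :=
  Iff.rfl

lemma delPt_insSing (hn' : s + 1 < n) (q : Setoid (Fin (n - 1))) :
    delPt s (insSing n s hn' q) = q := by
  refine Setoid.ext fun x y => ?_
  rw [delPt_rel, insSing_rel]
  constructor
  · rintro (heq | ⟨-, -, h⟩)
    · rw [fEmb_inj s heq]
    · rwa [gRet_fEmb hn', gRet_fEmb hn'] at h
  · intro h
    exact Or.inr ⟨fEmb_ne s x, fEmb_ne s y,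
      by rwa [gRet_fEmb hn', gRet_fEmb hn']⟩

lemma insSing_delPt {r : ℕ} (hr : r = 2 * s) (hs : 1 ≤ s) (hn : 2 * s + 1 < n)
    (hn' : s + 1 < n) {p : Setoid (Fin n)} (hp : p ∈ Yset n r) :
    insSing n s hn' (delPt s p) = p := by
  have hsn : s < n := by omega
  have hsp : IsSingletonPt p ⟨s, by omega⟩ := sing_of_mem_Y hr hs hn hp
  refine Setoid.ext fun a b => ?_
  rw [insSing_rel]
  constructor
  · rintro (rfl | ⟨ha, hb, h⟩)
    · exact p.iseqv.refl a
    · have h' : p.r (fEmb n s (gRet n s hn' a)) (fEmb n s (gRet n s hn' b)) := h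
      rwa [fEmb_gRet hn' ha, fEmb_gRet hn' hb] at h'
  · intro h
    by_cases ha : (a : ℕ) = s
    · have ha' : a = ⟨s, hsn⟩ := Fin.ext ha
      subst ha'
      exact Or.inl (hsp b h).symm
    · by_cases hb : (b : ℕ) = s
      · exfalso
        have hb' : b = ⟨s, hsn⟩ := Fin.ext hb
        subst hb'
        exact ha (congrArg Fin.val (hsp a (p.iseqv.symm h)))
      · refine Or.inr ⟨ha, hb, ?_⟩
        show p.r (fEmb n s (gRet n s hn' a)) (fEmb n s (gRet n s hn' b))
        rwa [fEmb_gRet hn' ha, fEmb_gRet hn' hb]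

lemma insSing_mem_Y {r : ℕ} (hr : r = 2 * s) (hs : 1 ≤ s) (hn : 2 * s + 1 < n)
    (hn' : s + 1 < n) {q : Setoid (Fin (n - 1))} (hq : q ∈ Wset (n - 1) (r - 1)) :
    insSing n s hn' q ∈ Yset n r := by
  obtain ⟨hc, hsing, hdist⟩ := hq
  constructor
  · refine ⟨?_, ?_, ?_⟩
    · rintro ⟨a, b, c, d, hab, hbc, hcd, hac, hbd, hnab⟩
      rcases hac with heq | ⟨has, hcs, hac'⟩
      · exact absurd heq (Fin.ne_of_lt (lt_trans hab hbc))
      rcases hbd with heq | ⟨hbs, hds, hbd'⟩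
      · exact absurd heq (Fin.ne_of_lt (lt_trans hbc hcd))
      refine hc ⟨gRet n s hn' a, gRet n s hn' b, gRet n s hn' c, gRet n s hn' d,
        gRet_lt_gRet hn' hab has hbs, gRet_lt_gRet hn' hbc hbs hcs,
        gRet_lt_gRet hn' hcd hcs hds, hac', hbd', ?_⟩
      intro hcontra
      exact hnab (Or.inr ⟨has, hbs, hcontra⟩)
    · intro i hi hising
      rw [if_pos (by omega : r % 2 = 0)] at hi
      have hilt : (i : ℕ) < s := by omega
      have hine : (i : ℕ) ≠ s := by omega
      have hgval : ((gRet n s hn' i : Fin (n - 1)) : ℕ) = (i : ℕ) := by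
        rw [gRet_val, if_pos hilt]
      refine hsing (gRet n s hn' i)
        (by rw [if_neg (by omega : ¬((r - 1) % 2 = 0))]; omega) ?_
      intro j hj
      have hrel : (insSing n s hn' q).r i (fEmb n s j) := by
        refine Or.inr ⟨hine, fEmb_ne s j, ?_⟩
        rwa [gRet_fEmb hn']
      have := hising _ hrel
      calc j = gRet n s hn' (fEmb n s j) := (gRet_fEmb hn' j).symm
      _ = gRet n s hn' i := by rw [this]
    · intro i j hi hj hrel
      rcases hrel with heq | ⟨his, hjs, h⟩
      · exact heq
      · have hilt : (i : ℕ) < s := by omega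
        have hjlt : (j : ℕ) < s := by omega
        have := hdist (gRet n s hn' i) (gRet n s hn' j)
          (by rw [gRet_val, if_pos hilt]; omega)
          (by rw [gRet_val, if_pos hjlt]; omega) h
        have hv := congrArg Fin.val this
        rw [gRet_val, gRet_val, if_pos hilt, if_pos hjlt] at hv
        exact Fin.ext hv
  · intro hmem
    refine hmem.2.1 ⟨s, by omega⟩ ?_ ?_
    · rw [if_neg (by omega : ¬((r + 1) % 2 = 0))]
      show s < (r + 1) / 2 + 1
      omega
    · intro j hj
      rcases hj with heq | ⟨hne, -, -⟩
      · exact heq.symm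
      · exact absurd rfl hne

end Comb

/-- Even case `0 < r = 2s < n-1`: (a) for every `p ∈ Y(n,r)` the point `s+1` (1-indexed,
i.e. index `s = r/2`) is a singleton of `p`; (b) deleting the point `s+1` is a bijection
from `Y(n,r)` onto `W(n-1,r-1)`; (c) the entries match up to a factor `N`:
`e_r(p,q) = N · e_{r-1}(α(p), α(q))`. Consequently `B(n,r)` equals `N · A(n-1,r-1)` up
to a simultaneous permutation of rows and columns. -/
theorem B_eq_A_even (N : ℕ) (hN : 1 ≤ N) (n r : ℕ) (hr0 : 0 < r) (heven : r % 2 = 0)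
    (hrn : r < n - 1) :
    (∀ p ∈ Yset n r, IsSingletonPt p ⟨r / 2, by omega⟩) ∧
    Set.BijOn (delPt (r / 2)) (Yset n r) (Wset (n - 1) (r - 1)) ∧
    (∀ p ∈ Yset n r, ∀ q ∈ Yset n r,
      eEnt N r p q = (N : ℝ) * eEnt N (r - 1) (delPt (r / 2) p) (delPt (r / 2) q)) ∧
    (∃ σ : ↥(Yset n r) ≃ ↥(Wset (n - 1) (r - 1)),
      ∀ p q : ↥(Yset n r),
        eEnt N r p.1 q.1 = (N : ℝ) * eEnt N (r - 1) (σ p).1 (σ q).1) := by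
  have hr : r = 2 * (r / 2) := by omega
  have hs : 1 ≤ r / 2 := by omega
  have hn2 : 2 * (r / 2) + 1 < n := by omega
  have hn' : r / 2 + 1 < n := by omega
  have hbij : Set.BijOn (delPt (r / 2)) (Yset n r) (Wset (n - 1) (r - 1)) := by
    refine ⟨fun p hp => delPt_mem_W hr hs hn2 hp, ?_, ?_⟩
    · intro p1 h1 p2 h2 heq
      rw [← insSing_delPt hr hs hn2 hn' h1, ← insSing_delPt hr hs hn2 hn' h2, heq]
    · intro q0 hq0
      exact ⟨insSing n (r / 2) hn' q0, insSing_mem_Y hr hs hn2 hn' hq0,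
        delPt_insSing hn' q0⟩
  have hent : ∀ p ∈ Yset n r, ∀ q ∈ Yset n r,
      eEnt N r p q = (N : ℝ) * eEnt N (r - 1) (delPt (r / 2) p) (delPt (r / 2) q) :=
    fun p hp q hq => eEnt_delPt N hs hn2 (sing_of_mem_Y hr hs hn2 hp)
      (sing_of_mem_Y hr hs hn2 hq) hr
  refine ⟨fun p hp => sing_of_mem_Y hr hs hn2 hp, hbij, hent, ?_⟩
  refine ⟨Set.BijOn.equiv _ hbij, ?_⟩
  intro p q
  have h1 : ((Set.BijOn.equiv _ hbij) p).1 = delPt (r / 2) p.1 := rfl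
  have h2 : ((Set.BijOn.equiv _ hbij) q).1 = delPt (r / 2) q.1 := rfl
  rw [h1, h2]
  exact hent p.1 p.2 q.1 q.2
end
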